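/- arXiv:2308.06586 — 3 statements merged into one kernel-verified Lean document; each statement's English description precedes it below -/
import Mathlib

section
/- There exists an absolute constant C₀ > 0 such that the following holds. Let ν > 0, let u₀ : 𝕋 → ℝ be a smooth function with zero mean (∫_𝕋 u₀ dx = 0) and ‖∂ₓu₀‖_{L²(𝕋)} ≤ 1, and let u : [0,∞) × 𝕋 → ℝ be a smooth solution of the viscous Burgers equation ∂ₜu + u ∂ₓu = ν ∂ₓ²u on (0,∞) × 𝕋 with u(0,·) = u₀. Then for every t ≥ 0, ∫_𝕋 (∂ₓu(t,x))² dx ≤ C₀ (1 + ν⁻¹). -/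
open MeasureTheory

namespace BurgersAux
open Set intervalIntegral Function
local notation "Ι" => Set.uIoc
set_option linter.unusedSectionVars false
set_option maxHeartbeats 1000000




/-- slice in x -/
lemma hasDerivAt_slice_x {G : ℝ × ℝ → ℝ} {t x : ℝ} (h : DifferentiableAt ℝ G (t, x)) :
    HasDerivAt (fun y => G (t, y)) (fderiv ℝ G (t, x) (0, 1)) x := by
  have hc : HasDerivAt (fun y => ((t, y) : ℝ × ℝ)) ((0 : ℝ), (1 : ℝ)) x :=
    (hasDerivAt_const x t).prodMk (hasDerivAt_id x)
  exact h.hasFDerivAt.comp_hasDerivAt x hc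

lemma hasDerivAt_slice_t {G : ℝ × ℝ → ℝ} {t x : ℝ} (h : DifferentiableAt ℝ G (t, x)) :
    HasDerivAt (fun s => G (s, x)) (fderiv ℝ G (t, x) (1, 0)) t := by
  have hc : HasDerivAt (fun s => ((s, x) : ℝ × ℝ)) ((1 : ℝ), (0 : ℝ)) t :=
    (hasDerivAt_id t).prodMk (hasDerivAt_const t x)
  exact h.hasFDerivAt.comp_hasDerivAt t hc

noncomputable def px (G : ℝ × ℝ → ℝ) : ℝ × ℝ → ℝ := fun q => fderiv ℝ G q (0, 1)
noncomputable def pt (G : ℝ × ℝ → ℝ) : ℝ × ℝ → ℝ := fun q => fderiv ℝ G q (1, 0)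

lemma contDiffOn_apply_fderiv {G : ℝ × ℝ → ℝ} {O : Set (ℝ × ℝ)} (hO : IsOpen O)
    (h : ContDiffOn ℝ (⊤ : ℕ∞) G O) (v : ℝ × ℝ) :
    ContDiffOn ℝ (⊤ : ℕ∞) (fun q => fderiv ℝ G q v) O := by
  intro q hq
  have h1 : ContDiffAt ℝ (⊤ : ℕ∞) G q := h.contDiffAt (hO.mem_nhds hq)
  have h2 : ContDiffAt ℝ (⊤ : ℕ∞) (fderiv ℝ G) q := h1.fderiv_right (by simp)
  exact (h2.clm_apply contDiffAt_const).contDiffWithinAt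

lemma contDiffOn_px {G : ℝ × ℝ → ℝ} {O : Set (ℝ × ℝ)} (hO : IsOpen O)
    (h : ContDiffOn ℝ (⊤ : ℕ∞) G O) : ContDiffOn ℝ (⊤ : ℕ∞) (px G) O :=
  contDiffOn_apply_fderiv hO h _

lemma contDiffOn_pt {G : ℝ × ℝ → ℝ} {O : Set (ℝ × ℝ)} (hO : IsOpen O)
    (h : ContDiffOn ℝ (⊤ : ℕ∞) G O) : ContDiffOn ℝ (⊤ : ℕ∞) (pt G) O :=
  contDiffOn_apply_fderiv hO h _

/-- Clairaut on an open set. -/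
lemma pt_px_eq_px_pt {G : ℝ × ℝ → ℝ} {O : Set (ℝ × ℝ)} (hO : IsOpen O)
    (h : ContDiffOn ℝ (⊤ : ℕ∞) G O) {q : ℝ × ℝ} (hq : q ∈ O) :
    pt (px G) q = px (pt G) q := by
  have hev : ∀ᶠ y in nhds q, HasFDerivAt G (fderiv ℝ G y) y := by
    filter_upwards [hO.mem_nhds hq] with y hy
    exact ((h.contDiffAt (hO.mem_nhds hy)).differentiableAt (by simp)).hasFDerivAt
  have hq' : ContDiffAt ℝ (⊤ : ℕ∞) G q := h.contDiffAt (hO.mem_nhds hq)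
  have hd2 : DifferentiableAt ℝ (fderiv ℝ G) q :=
    (hq'.fderiv_right (m := 1) (WithTop.coe_le_coe.2 le_top)).differentiableAt one_ne_zero
  have hsymm := second_derivative_symmetric_of_eventually hev hd2.hasFDerivAt
    ((1 : ℝ), (0 : ℝ)) ((0 : ℝ), (1 : ℝ))
  have e1 : ∀ v w : ℝ × ℝ,
      fderiv ℝ (fun y => fderiv ℝ G y v) q w = fderiv ℝ (fderiv ℝ G) q w v := by
    intro v w
    have : HasFDerivAt (fun y => fderiv ℝ G y v)
        ((ContinuousLinearMap.apply ℝ ℝ v).comp (fderiv ℝ (fderiv ℝ G) q)) q :=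
      (ContinuousLinearMap.apply ℝ ℝ v).hasFDerivAt.comp q hd2.hasFDerivAt
    rw [this.fderiv]; rfl
  show fderiv ℝ (fun y => fderiv ℝ G y (0,1)) q (1,0) = fderiv ℝ (fun y => fderiv ℝ G y (1,0)) q (0,1)
  rw [e1, e1]
  exact hsymm

/-- derivative of a periodic function is periodic -/
lemma periodic_deriv' {f : ℝ → ℝ} (hf : ∀ x, f (x + 1) = f x) (x : ℝ) :
    deriv f (x + 1) = deriv f x := by
  have : (fun y => f (y + 1)) = f := funext hf
  rw [← deriv_comp_add_const f 1 x, this]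





/-- Differentiation under the integral sign over `[0,1]`. -/
lemma hasDerivAt_param_integral {Φ Φ' : ℝ → ℝ → ℝ} {t δ : ℝ} (hδ : 0 < δ)
    (hΦ : ContinuousOn (uncurry Φ) (Icc (t - δ) (t + δ) ×ˢ Icc 0 1))
    (hΦ' : ContinuousOn (uncurry Φ') (Icc (t - δ) (t + δ) ×ˢ Icc 0 1))
    (hd : ∀ s ∈ Metric.ball t δ, ∀ x ∈ Icc (0:ℝ) 1,
      HasDerivAt (fun r => Φ r x) (Φ' s x) s) :
    HasDerivAt (fun s => ∫ x in (0:ℝ)..1, Φ s x) (∫ x in (0:ℝ)..1, Φ' t x) t := by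
  have htmem : t ∈ Icc (t - δ) (t + δ) := by constructor <;> linarith
  have hIoc : (Ι (0:ℝ) 1) = Ioc 0 1 := by rw [uIoc_of_le zero_le_one]
  -- bound
  obtain ⟨C, hC⟩ := (IsCompact.exists_bound_of_continuousOn
    ((isCompact_Icc).prod isCompact_Icc) hΦ')
  have sliceCont : ∀ s ∈ Icc (t - δ) (t + δ), ContinuousOn (Φ s) (Icc 0 1) := by
    intro s hs
    have : ContinuousOn (fun x => uncurry Φ (s, x)) (Icc 0 1) := by
      apply hΦ.comp (by fun_prop)
      intro x hx; exact ⟨hs, hx⟩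
    exact this
  have sliceCont' : ∀ s ∈ Icc (t - δ) (t + δ), ContinuousOn (Φ' s) (Icc 0 1) := by
    intro s hs
    have : ContinuousOn (fun x => uncurry Φ' (s, x)) (Icc 0 1) := by
      apply hΦ'.comp (by fun_prop)
      intro x hx; exact ⟨hs, hx⟩
    exact this
  have meas : ∀ᶠ s in nhds t, AEStronglyMeasurable (Φ s) (volume.restrict (Ι (0:ℝ) 1)) := by
    have : ∀ᶠ s in nhds t, s ∈ Icc (t - δ) (t + δ) :=
      Icc_mem_nhds (by linarith) (by linarith)
    filter_upwards [this] with s hs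
    rw [hIoc]
    exact ((sliceCont s hs).mono Ioc_subset_Icc_self).aestronglyMeasurable measurableSet_Ioc
  have hint : IntervalIntegrable (Φ t) volume 0 1 := by
    have h01 : uIcc (0:ℝ) 1 = Icc 0 1 := uIcc_of_le zero_le_one
    exact ContinuousOn.intervalIntegrable (h01 ▸ sliceCont t htmem)
  have meas' : AEStronglyMeasurable (Φ' t) (volume.restrict (Ι (0:ℝ) 1)) := by
    rw [hIoc]
    exact ((sliceCont' t htmem).mono Ioc_subset_Icc_self).aestronglyMeasurable measurableSet_Ioc
  have hbound : ∀ᵐ x ∂volume, x ∈ Ι (0:ℝ) 1 → ∀ s ∈ Metric.ball t δ, ‖Φ' s x‖ ≤ C := by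
    filter_upwards with x hx s hs
    apply hC (s, x)
    have hsI : s ∈ Icc (t - δ) (t + δ) := by
      rw [Metric.mem_ball, Real.dist_eq, abs_lt] at hs
      constructor <;> linarith [hs.1, hs.2]
    rw [hIoc] at hx
    exact ⟨hsI, Ioc_subset_Icc_self hx⟩
  have hdiff : ∀ᵐ x ∂volume, x ∈ Ι (0:ℝ) 1 → ∀ s ∈ Metric.ball t δ,
      HasDerivAt (fun r => Φ r x) (Φ' s x) s := by
    filter_upwards with x hx s hs
    rw [hIoc] at hx
    exact hd s hs x (Ioc_subset_Icc_self hx)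
  exact (intervalIntegral.hasDerivAt_integral_of_dominated_loc_of_deriv_le (Metric.ball_mem_nhds t hδ) meas hint meas'
    hbound (intervalIntegrable_const) hdiff).2

/-- Continuity on `Ici 0` of a parametric integral. -/
lemma continuousOn_param_integral {Φ : ℝ → ℝ → ℝ}
    (hΦ : ContinuousOn (uncurry Φ) (Ici 0 ×ˢ (univ : Set ℝ))) :
    ContinuousOn (fun t => ∫ x in (0:ℝ)..1, Φ t x) (Ici (0:ℝ)) := by
  rw [continuousOn_iff_continuous_restrict]
  have : Continuous (fun p : ↥(Ici (0:ℝ)) × ℝ => uncurry Φ ((p.1 : ℝ), p.2)) := by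
    apply hΦ.comp_continuous (by fun_prop)
    intro p; exact ⟨p.1.2, trivial⟩
  exact continuous_parametric_intervalIntegral_of_continuous'
    (f := fun (a : ↥(Ici (0:ℝ))) (x : ℝ) => Φ (a : ℝ) x) this 0 1

/-- Growth bound from a derivative bound on `(0,∞)`. -/
lemma growth_bound {f f' : ℝ → ℝ} {c : ℝ}
    (hcont : ContinuousOn f (Ici 0))
    (hd : ∀ t ∈ Ioi (0:ℝ), HasDerivAt f (f' t) t)
    (hb : ∀ t ∈ Ioi (0:ℝ), f' t ≤ c) {t : ℝ} (ht : 0 ≤ t) :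
    f t ≤ f 0 + c * t := by
  set g : ℝ → ℝ := fun s => f s - c * s with hg
  have hgd : ∀ s ∈ Ioi (0:ℝ), HasDerivAt g (f' s - c) s := by
    intro s hs
    have h1 := (hd s hs).sub ((hasDerivAt_id s).const_mul c)
    rw [mul_one] at h1
    exact h1
  have hanti : AntitoneOn g (Ici 0) := by
    apply antitoneOn_of_deriv_nonpos (convex_Ici 0)
    · exact hcont.sub ((continuous_const.mul continuous_id).continuousOn)
    · intro s hs
      rw [interior_Ici] at hs
      exact ((hgd s hs).differentiableAt).differentiableWithinAt
    · intro s hs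
      rw [interior_Ici] at hs
      rw [(hgd s hs).deriv]
      linarith [hb s hs]
  have := hanti (self_mem_Ici) ht ht
  simp only [hg, mul_zero, sub_zero] at this
  linarith [this]





/-- Cauchy–Schwarz for interval integrals of continuous functions. -/
lemma integral_mul_sq_le {f g : ℝ → ℝ} (hf : Continuous f) (hg : Continuous g) :
    (∫ x in (0:ℝ)..1, f x * g x) ^ 2 ≤
      (∫ x in (0:ℝ)..1, f x ^ 2) * (∫ x in (0:ℝ)..1, g x ^ 2) := by
  set A := ∫ x in (0:ℝ)..1, f x ^ 2 with hA
  set B := ∫ x in (0:ℝ)..1, f x * g x with hB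
  set C := ∫ x in (0:ℝ)..1, g x ^ 2 with hC
  have key : ∀ lam : ℝ, 0 ≤ A * (lam * lam) + (2 * B) * lam + C := by
    intro lam
    have hA' : IntervalIntegrable (fun x => lam * lam * f x ^ 2) volume 0 1 :=
      (continuous_const.mul (hf.pow 2)).intervalIntegrable 0 1
    have hB' : IntervalIntegrable (fun x => 2 * lam * (f x * g x)) volume 0 1 :=
      (continuous_const.mul (hf.mul hg)).intervalIntegrable 0 1
    have hC' : IntervalIntegrable (fun x => g x ^ 2) volume 0 1 :=
      (hg.pow 2).intervalIntegrable 0 1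
    have h1 : (∫ x in (0:ℝ)..1, (lam * f x + g x) ^ 2) =
        lam * lam * A + 2 * lam * B + C := by
      have e : ∀ x : ℝ, (lam * f x + g x) ^ 2
          = lam * lam * f x ^ 2 + 2 * lam * (f x * g x) + g x ^ 2 := fun x => by ring
      simp_rw [e]
      rw [intervalIntegral.integral_add (hA'.add hB') hC',
        intervalIntegral.integral_add hA' hB',
        intervalIntegral.integral_const_mul, intervalIntegral.integral_const_mul]
    have h0 : 0 ≤ ∫ x in (0:ℝ)..1, (lam * f x + g x) ^ 2 :=
      intervalIntegral.integral_nonneg zero_le_one (fun x _ => sq_nonneg _)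
    nlinarith [h0, h1]
  have hd := discrim_le_zero key
  rw [discrim] at hd
  nlinarith [hd]

lemma integral_abs_le_sqrt {f : ℝ → ℝ} (hf : Continuous f) :
    (∫ x in (0:ℝ)..1, |f x|) ≤ Real.sqrt (∫ x in (0:ℝ)..1, f x ^ 2) := by
  have h := integral_mul_sq_le (f := fun x => |f x|) (g := fun x => (1:ℝ)) hf.abs continuous_const
  simp only [mul_one, one_pow, intervalIntegral.integral_const, smul_eq_mul, sub_zero] at h
  have habs : (∫ x in (0:ℝ)..1, |f x| ^ 2) = ∫ x in (0:ℝ)..1, f x ^ 2 := by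
    congr 1; funext x; rw [sq_abs]
  rw [habs] at h
  have hnn : 0 ≤ ∫ x in (0:ℝ)..1, |f x| :=
    intervalIntegral.integral_nonneg zero_le_one (fun x _ => abs_nonneg _)
  have h2 : 0 ≤ ∫ x in (0:ℝ)..1, f x ^ 2 :=
    intervalIntegral.integral_nonneg zero_le_one (fun x _ => sq_nonneg _)
  nlinarith [Real.sq_sqrt h2, Real.sqrt_nonneg (∫ x in (0:ℝ)..1, f x ^ 2), hnn]

/-- `∫ fg ≤ √(∫f²) √(∫g²)` -/
lemma integral_mul_le_sqrt_mul_sqrt {f g : ℝ → ℝ} (hf : Continuous f) (hg : Continuous g) :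
    (∫ x in (0:ℝ)..1, f x * g x) ≤
      Real.sqrt (∫ x in (0:ℝ)..1, f x ^ 2) * Real.sqrt (∫ x in (0:ℝ)..1, g x ^ 2) := by
  have h := integral_mul_sq_le hf hg
  have h2 : 0 ≤ ∫ x in (0:ℝ)..1, f x ^ 2 :=
    intervalIntegral.integral_nonneg zero_le_one (fun x _ => sq_nonneg _)
  have h3 : 0 ≤ ∫ x in (0:ℝ)..1, g x ^ 2 :=
    intervalIntegral.integral_nonneg zero_le_one (fun x _ => sq_nonneg _)
  calc (∫ x in (0:ℝ)..1, f x * g x) ≤ |∫ x in (0:ℝ)..1, f x * g x| := le_abs_self _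
    _ = Real.sqrt ((∫ x in (0:ℝ)..1, f x * g x) ^ 2) := (Real.sqrt_sq_eq_abs _).symm
    _ ≤ Real.sqrt ((∫ x in (0:ℝ)..1, f x ^ 2) * (∫ x in (0:ℝ)..1, g x ^ 2)) :=
        Real.sqrt_le_sqrt h
    _ = Real.sqrt (∫ x in (0:ℝ)..1, f x ^ 2) * Real.sqrt (∫ x in (0:ℝ)..1, g x ^ 2) :=
        Real.sqrt_mul h2 _

/-- a continuous function with zero integral on `[0,1]` has a zero there -/
lemma exists_zero_of_integral_zero {f : ℝ → ℝ} (hf : Continuous f)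
    (h0 : (∫ x in (0:ℝ)..1, f x) = 0) : ∃ x₀ ∈ Icc (0:ℝ) 1, f x₀ = 0 := by
  by_contra hno
  push_neg at hno
  have hsign : (∀ x ∈ Icc (0:ℝ) 1, 0 < f x) ∨ (∀ x ∈ Icc (0:ℝ) 1, f x < 0) := by
    rcases lt_or_gt_of_ne (hno 0 ⟨le_refl 0, zero_le_one⟩) with hneg | hpos
    · right
      intro x hx
      rcases lt_or_gt_of_ne (hno x hx) with h | h
      · exact h
      · exfalso
        have : (0:ℝ) ∈ uIcc (f 0) (f x) := by
          rw [Set.mem_uIcc]; left; exact ⟨hneg.le, h.le⟩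
        obtain ⟨y, hy, hfy⟩ := intermediate_value_uIcc (a := 0) (b := x)
          (hf.continuousOn) this
        have hyIcc : y ∈ Icc (0:ℝ) 1 := by
          rcases Set.mem_uIcc.1 hy with h' | h'
          · exact ⟨h'.1, le_trans h'.2 hx.2⟩
          · exact ⟨le_trans hx.1 h'.1, h'.2.trans zero_le_one⟩
        exact hno y hyIcc hfy
    · left
      intro x hx
      rcases lt_or_gt_of_ne (hno x hx) with h | h
      · exfalso
        have : (0:ℝ) ∈ uIcc (f 0) (f x) := by
          rw [Set.mem_uIcc]; right; exact ⟨h.le, hpos.le⟩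
        obtain ⟨y, hy, hfy⟩ := intermediate_value_uIcc (a := 0) (b := x)
          (hf.continuousOn) this
        have hyIcc : y ∈ Icc (0:ℝ) 1 := by
          rcases Set.mem_uIcc.1 hy with h' | h'
          · exact ⟨h'.1, le_trans h'.2 hx.2⟩
          · exact ⟨le_trans hx.1 h'.1, h'.2.trans zero_le_one⟩
        exact hno y hyIcc hfy
      · exact h
  rcases hsign with hpos | hneg
  · have : 0 < ∫ x in (0:ℝ)..1, f x :=
      intervalIntegral_pos_of_pos_on (hf.intervalIntegrable 0 1)
        (fun x hx => hpos x (Ioo_subset_Icc_self hx)) zero_lt_one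
    linarith
  · have : 0 < ∫ x in (0:ℝ)..1, -f x :=
      intervalIntegral_pos_of_pos_on ((hf.neg).intervalIntegrable 0 1)
        (fun x hx => by simpa using (hneg x (Ioo_subset_Icc_self hx))) zero_lt_one
    rw [intervalIntegral.integral_neg, h0] at this
    simp at this




section beta
variable {ε : ℝ} (hε : 0 < ε)

noncomputable def bfun (ε : ℝ) : ℝ → ℝ := fun y => Real.sqrt (y ^ 2 + ε ^ 2)

include hε

lemma bfun_pos (y : ℝ) : 0 < bfun ε y := Real.sqrt_pos.2 (by positivity)

lemma bfun_sq (y : ℝ) : (bfun ε y) ^ 2 = y ^ 2 + ε ^ 2 := Real.sq_sqrt (by positivity)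

lemma abs_le_bfun (y : ℝ) : |y| ≤ bfun ε y := by
  rw [← Real.sqrt_sq_eq_abs]
  exact Real.sqrt_le_sqrt (by nlinarith)

lemma bfun_le (y : ℝ) : bfun ε y ≤ |y| + ε := by
  rw [← Real.sqrt_sq (by positivity : (0:ℝ) ≤ |y| + ε)]
  apply Real.sqrt_le_sqrt
  have : |y| ^ 2 = y ^ 2 := sq_abs y
  nlinarith [abs_nonneg y]

lemma continuous_bfun : Continuous (bfun ε) :=
  Real.continuous_sqrt.comp (by fun_prop)

lemma hasDerivAt_bfun (y : ℝ) : HasDerivAt (bfun ε) (y / bfun ε y) y := by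
  have hinner : HasDerivAt (fun y : ℝ => y ^ 2 + ε ^ 2) (2 * y) y := by
    simpa using ((hasDerivAt_pow 2 y).add_const (ε ^ 2))
  have hne : y ^ 2 + ε ^ 2 ≠ 0 := by positivity
  have := (Real.hasDerivAt_sqrt hne).comp y hinner
  refine this.congr_deriv ?_
  have hb' : Real.sqrt (y ^ 2 + ε ^ 2) ≠ 0 := ne_of_gt (Real.sqrt_pos.2 (by positivity))
  simp only [bfun]
  field_simp

lemma continuous_bderiv : Continuous (fun y => y / bfun ε y) :=
  continuous_id.div (continuous_bfun hε) (fun y => (bfun_pos hε y).ne')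

lemma hasDerivAt_bderiv (y : ℝ) :
    HasDerivAt (fun y => y / bfun ε y) (ε ^ 2 / (bfun ε y) ^ 3) y := by
  have h := (hasDerivAt_id y).div (hasDerivAt_bfun hε y) (bfun_pos hε y).ne'
  refine h.congr_deriv ?_
  have hb := bfun_pos hε y
  have hsq := bfun_sq hε y
  field_simp
  simp only [id_eq]
  linear_combination hsq

/-- key pointwise bound : `y·β(y) - β'(y)·y² ≤ ε²` -/
lemma bfun_pointwise (y : ℝ) : y * bfun ε y - (y / bfun ε y) * y ^ 2 ≤ ε ^ 2 := by
  have hb := bfun_pos hε y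
  have hsq := bfun_sq hε y
  have habs := abs_le_bfun hε y
  have : y * bfun ε y - (y / bfun ε y) * y ^ 2 = y * ε ^ 2 / bfun ε y := by
    field_simp
    linear_combination y * hsq
  rw [this]
  rw [div_le_iff₀ hb]
  nlinarith [le_abs_self y, abs_nonneg y, sq_nonneg ε, mul_le_mul_of_nonneg_left habs (sq_nonneg ε)]

end beta

/-- Barrier argument. -/
lemma barrier {f f' : ℝ → ℝ} {B : ℝ} (hcont : ContinuousOn f (Ici 0)) (hf0 : f 0 ≤ B)
    (hd : ∀ t ∈ Ioi (0:ℝ), HasDerivAt f (f' t) t)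
    (hneg : ∀ t ∈ Ioi (0:ℝ), B ≤ f t → f' t < 0) :
    ∀ t, 0 ≤ t → f t ≤ B := by
  intro t ht
  by_contra hcon
  push_neg at hcon
  have ht0 : 0 < t := by
    rcases eq_or_lt_of_le ht with h | h
    · exfalso; rw [← h] at hcon; linarith
    · exact h
  set A := Icc 0 t ∩ f ⁻¹' (Iic B) with hA
  have hclosed : IsClosed A :=
    ContinuousOn.preimage_isClosed_of_isClosed
      (hcont.mono (Icc_subset_Ici_self)) isClosed_Icc isClosed_Iic
  have hne : A.Nonempty := ⟨0, ⟨le_refl 0, ht0.le⟩, by simpa using hf0⟩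
  have hbdd : BddAbove A := (BddAbove.mono (inter_subset_left) (bddAbove_Icc))
  set τ := sSup A with hτ
  have hτA : τ ∈ A := hclosed.csSup_mem hne hbdd
  have hτt : τ ≤ t := hτA.1.2
  have hτ0 : 0 ≤ τ := hτA.1.1
  have hfτ : f τ ≤ B := hτA.2
  have hτlt : τ < t := by
    rcases eq_or_lt_of_le hτt with h | h
    · exfalso; rw [h] at hfτ; linarith
    · exact h
  have hgt : ∀ s ∈ Ioc τ t, B < f s := by
    intro s hs
    by_contra hle
    push_neg at hle
    have : s ∈ A := ⟨⟨hτ0.trans hs.1.le, hs.2⟩, hle⟩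
    have := le_csSup hbdd this
    exact absurd hs.1 (not_lt.2 this)
  have hanti : StrictAntiOn f (Icc τ t) := by
    apply strictAntiOn_of_deriv_neg (convex_Icc τ t)
    · exact hcont.mono (fun y hy => hτ0.trans hy.1)
    · intro s hs
      rw [interior_Icc] at hs
      have hs0 : s ∈ Ioi (0:ℝ) := lt_of_le_of_lt hτ0 hs.1
      rw [(hd s hs0).deriv]
      exact hneg s hs0 (hgt s ⟨hs.1, hs.2.le⟩).le
  have := hanti ⟨le_refl τ, hτlt.le⟩ ⟨hτlt.le, le_refl t⟩ hτlt
  linarith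




noncomputable def Wf (u : ℝ → ℝ → ℝ) : ℝ × ℝ → ℝ := px (uncurry u)
noncomputable def W2f (u : ℝ → ℝ → ℝ) : ℝ × ℝ → ℝ := px (px (uncurry u))
noncomputable def W3f (u : ℝ → ℝ → ℝ) : ℝ × ℝ → ℝ := px (px (px (uncurry u)))
noncomputable def Utf (u : ℝ → ℝ → ℝ) : ℝ × ℝ → ℝ := pt (uncurry u)
noncomputable def Wtf (u : ℝ → ℝ → ℝ) : ℝ × ℝ → ℝ := pt (px (uncurry u))

def Od : Set (ℝ × ℝ) := Ioi 0 ×ˢ univ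

lemma isOpen_Od : IsOpen Od := (isOpen_Ioi).prod isOpen_univ

lemma Od_subset : Od ⊆ Ici 0 ×ˢ (univ : Set ℝ) :=
  prod_mono (Ioi_subset_Ici le_rfl) (subset_refl _)

lemma mem_Od {t x : ℝ} (ht : 0 < t) : ((t, x) : ℝ × ℝ) ∈ Od := ⟨ht, trivial⟩

section core
variable {ν : ℝ} {u₀ : ℝ → ℝ} {u : ℝ → ℝ → ℝ}
  (hreg : ContDiffOn ℝ (⊤ : ℕ∞) (Function.uncurry u) (Ici 0 ×ˢ (univ : Set ℝ)))

include hreg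

lemma hregO : ContDiffOn ℝ (⊤ : ℕ∞) (Function.uncurry u) Od := hreg.mono Od_subset

lemma smoothW : ContDiffOn ℝ (⊤ : ℕ∞) (Wf u) Od := contDiffOn_px isOpen_Od (hregO hreg)
lemma smoothW2 : ContDiffOn ℝ (⊤ : ℕ∞) (W2f u) Od := contDiffOn_px isOpen_Od (smoothW hreg)
lemma smoothW3 : ContDiffOn ℝ (⊤ : ℕ∞) (W3f u) Od := contDiffOn_px isOpen_Od (smoothW2 hreg)
lemma smoothUt : ContDiffOn ℝ (⊤ : ℕ∞) (Utf u) Od := contDiffOn_pt isOpen_Od (hregO hreg)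
lemma smoothWt : ContDiffOn ℝ (⊤ : ℕ∞) (Wtf u) Od := contDiffOn_pt isOpen_Od (smoothW hreg)

lemma diffAt_of_smooth {G : ℝ × ℝ → ℝ} (hG : ContDiffOn ℝ (⊤ : ℕ∞) G Od) {q : ℝ × ℝ}
    (hq : q ∈ Od) : DifferentiableAt ℝ G q :=
  (hG.contDiffAt ((isOpen_Od).mem_nhds hq)).differentiableAt (by simp)

/-- slices in x, for t > 0 -/
lemma hasDerivAt_u_x {t x : ℝ} (ht : 0 < t) :
    HasDerivAt (u t) (Wf u (t, x)) x := by
  have := hasDerivAt_slice_x (diffAt_of_smooth hreg (hregO hreg) (mem_Od ht (x := x)))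
  exact this

lemma deriv_u_x {t : ℝ} (ht : 0 < t) (x : ℝ) : deriv (u t) x = Wf u (t, x) :=
  (hasDerivAt_u_x hreg ht).deriv

lemma hasDerivAt_W_x {t x : ℝ} (ht : 0 < t) :
    HasDerivAt (fun y => Wf u (t, y)) (W2f u (t, x)) x :=
  hasDerivAt_slice_x (diffAt_of_smooth hreg (smoothW hreg) (mem_Od ht))

lemma hasDerivAt_W2_x {t x : ℝ} (ht : 0 < t) :
    HasDerivAt (fun y => W2f u (t, y)) (W3f u (t, x)) x :=
  hasDerivAt_slice_x (diffAt_of_smooth hreg (smoothW2 hreg) (mem_Od ht))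

lemma hasDerivAt_Ut_x {t x : ℝ} (ht : 0 < t) :
    HasDerivAt (fun y => Utf u (t, y)) (px (Utf u) (t, x)) x :=
  hasDerivAt_slice_x (diffAt_of_smooth hreg (smoothUt hreg) (mem_Od ht))

lemma deriv_deriv_u_x {t : ℝ} (ht : 0 < t) (x : ℝ) :
    deriv (deriv (u t)) x = W2f u (t, x) := by
  have h1 : deriv (u t) = fun y => Wf u (t, y) := funext (deriv_u_x hreg ht)
  rw [h1]
  exact (hasDerivAt_W_x hreg ht).deriv

/-- slices in t -/
lemma hasDerivAt_u_t {t x : ℝ} (ht : 0 < t) :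
    HasDerivAt (fun s => u s x) (Utf u (t, x)) t := by
  have := hasDerivAt_slice_t (diffAt_of_smooth hreg (hregO hreg) (mem_Od ht (x := x)))
  exact this

lemma hasDerivAt_W_t {t x : ℝ} (ht : 0 < t) :
    HasDerivAt (fun s => Wf u (s, x)) (Wtf u (t, x)) t :=
  hasDerivAt_slice_t (diffAt_of_smooth hreg (smoothW hreg) (mem_Od ht))

/-- slice continuity for t>0 -/
lemma cont_slice {G : ℝ × ℝ → ℝ} (hG : ContDiffOn ℝ (⊤ : ℕ∞) G Od) {t : ℝ} (ht : 0 < t) :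
    Continuous (fun x => G (t, x)) := by
  rw [continuous_iff_continuousAt]
  intro x
  exact ((hG.continuousOn.continuousAt ((isOpen_Od).mem_nhds (mem_Od ht)))).comp
    ((continuous_const.prodMk continuous_id).continuousAt)

lemma cont_u_slice {t : ℝ} (ht : 0 < t) : Continuous (u t) := by
  have := cont_slice hreg (hregO hreg) ht
  exact this

end core
section core2
variable {ν : ℝ} {u₀ : ℝ → ℝ} {u : ℝ → ℝ → ℝ}
  (hreg : ContDiffOn ℝ (⊤ : ℕ∞) (Function.uncurry u) (Ici 0 ×ˢ (univ : Set ℝ)))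
  (hper : ∀ t x, u t (x + 1) = u t x)
  (hpde : ∀ t x, 0 < t →
    deriv (fun s => u s x) t + u t x * deriv (u t) x = ν * deriv (deriv (u t)) x)

include hreg

include hpde in
lemma pde' (t x : ℝ) (ht : 0 < t) :
    Utf u (t, x) = ν * W2f u (t, x) - u t x * Wf u (t, x) := by
  have h := hpde t x ht
  rw [(hasDerivAt_u_t hreg ht).deriv, deriv_u_x hreg ht, deriv_deriv_u_x hreg ht] at h
  linarith

include hpde in
lemma key1 (t x : ℝ) (ht : 0 < t) :
    Wtf u (t, x) = ν * W3f u (t, x) - (Wf u (t, x)) ^ 2 - u t x * W2f u (t, x) := by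
  have hcl : Wtf u (t, x) = px (Utf u) (t, x) := by
    have := pt_px_eq_px_pt isOpen_Od (hregO hreg) (mem_Od ht (x := x))
    exact this
  have hslice : (fun y => Utf u (t, y)) =
      fun y => ν * W2f u (t, y) - u t y * Wf u (t, y) :=
    funext (fun y => pde' hreg hpde t y ht)
  have h2 : HasDerivAt (fun y => ν * W2f u (t, y) - u t y * Wf u (t, y))
      (ν * W3f u (t, x) - (u t x * W2f u (t, x) + Wf u (t, x) * Wf u (t, x))) x := by
    have ha := (hasDerivAt_W2_x hreg (x := x) ht).const_mul ν
    have hb := (hasDerivAt_u_x hreg (x := x) ht).mul (hasDerivAt_W_x hreg (x := x) ht)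
    have := ha.sub hb
    exact this.congr_deriv (by ring)
  have h1 : HasDerivAt (fun y => Utf u (t, y)) (px (Utf u) (t, x)) x :=
    hasDerivAt_Ut_x hreg ht
  rw [hslice] at h1
  have := h1.unique h2
  rw [hcl, this]
  ring

include hper in
lemma W_periodic {t : ℝ} (ht : 0 < t) (x : ℝ) : Wf u (t, x + 1) = Wf u (t, x) := by
  rw [← deriv_u_x hreg ht, ← deriv_u_x hreg ht]
  exact periodic_deriv' (hper t) x

include hper in
lemma W2_periodic {t : ℝ} (ht : 0 < t) (x : ℝ) : W2f u (t, x + 1) = W2f u (t, x) := by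
  have h1 : ∀ y, W2f u (t, y) = deriv (fun z => Wf u (t, z)) y :=
    fun y => ((hasDerivAt_W_x hreg ht).deriv).symm
  rw [h1, h1]
  exact periodic_deriv' (W_periodic hreg hper ht) x

end core2
section bdry
variable {u : ℝ → ℝ → ℝ}
  (hreg : ContDiffOn ℝ (⊤ : ℕ∞) (Function.uncurry u) (Ici 0 ×ˢ (univ : Set ℝ)))

include hreg

/-- joint continuity of `(t,x) ↦ deriv (u t) x` up to the boundary `t = 0` -/
lemma contOn_derivslice :
    ContinuousOn (fun q : ℝ × ℝ => deriv (u q.1) q.2) (Ici 0 ×ˢ (univ : Set ℝ)) := by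
  set S : Set (ℝ × ℝ) := Ici 0 ×ˢ (univ : Set ℝ) with hSdef
  have hSu : UniqueDiffOn ℝ S := (uniqueDiffOn_Ici 0).prod uniqueDiffOn_univ
  have key : ∀ q ∈ S, deriv (u q.1) q.2
      = fderivWithin ℝ (Function.uncurry u) S q ((0 : ℝ), (1 : ℝ)) := by
    intro q hq
    have hdw : HasFDerivWithinAt (Function.uncurry u)
        (fderivWithin ℝ (Function.uncurry u) S q) S q :=
      ((hreg.differentiableOn (by simp)) q hq).hasFDerivWithinAt
    have hc : HasDerivWithinAt (fun y => ((q.1, y) : ℝ × ℝ)) ((0 : ℝ), (1 : ℝ))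
        (univ : Set ℝ) q.2 :=
      (((hasDerivAt_const q.2 q.1)).prodMk (hasDerivAt_id q.2)).hasDerivWithinAt
    have hmaps : MapsTo (fun y => ((q.1, y) : ℝ × ℝ)) (univ : Set ℝ) S := by
      intro y _
      exact ⟨hq.1, trivial⟩
    have := hdw.comp_hasDerivWithinAt_of_eq q.2 hc hmaps (by simp)
    rw [hasDerivWithinAt_univ] at this
    exact this.deriv
  have hcont : ContinuousOn (fderivWithin ℝ (Function.uncurry u) S) S :=
    hreg.continuousOn_fderivWithin hSu (by simp)
  have hcont2 : ContinuousOn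
      (fun q => fderivWithin ℝ (Function.uncurry u) S q ((0 : ℝ), (1 : ℝ))) S :=
    (ContinuousLinearMap.apply ℝ ℝ ((0 : ℝ), (1 : ℝ))).continuous.comp_continuousOn hcont
  exact hcont2.congr key

end bdry
noncomputable def Efun (u : ℝ → ℝ → ℝ) : ℝ → ℝ :=
  fun t => ∫ x in (0:ℝ)..1, (deriv (u t) x) ^ 2
noncomputable def mfun (u : ℝ → ℝ → ℝ) : ℝ → ℝ := fun t => ∫ x in (0:ℝ)..1, u t x
noncomputable def Gfun (u : ℝ → ℝ → ℝ) (ε : ℝ) : ℝ → ℝ :=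
  fun t => ∫ x in (0:ℝ)..1, bfun ε (deriv (u t) x)

section functionals
variable {ν ε : ℝ} {u : ℝ → ℝ → ℝ}
  (hreg : ContDiffOn ℝ (⊤ : ℕ∞) (Function.uncurry u) (Ici 0 ×ˢ (univ : Set ℝ)))

include hreg

lemma contE : ContinuousOn (Efun u) (Ici (0:ℝ)) :=
  continuousOn_param_integral ((contOn_derivslice hreg).pow 2)

lemma contm : ContinuousOn (mfun u) (Ici (0:ℝ)) :=
  continuousOn_param_integral hreg.continuousOn

lemma contG (hε : 0 < ε) : ContinuousOn (Gfun u ε) (Ici (0:ℝ)) :=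
  continuousOn_param_integral ((continuous_bfun hε).comp_continuousOn (contOn_derivslice hreg))

omit hreg in
lemma rect_subset_Od {t : ℝ} (ht : 0 < t) :
    (Icc (t - t/2) (t + t/2) ×ˢ Icc (0:ℝ) 1) ⊆ Od := by
  rintro ⟨s, x⟩ ⟨hs, -⟩
  exact ⟨by simp only [mem_Icc] at hs; simp only [mem_Ioi]; linarith [hs.1], trivial⟩

omit hreg in
lemma ball_pos {t s : ℝ} (ht : 0 < t) (hs : s ∈ Metric.ball t (t/2)) : 0 < s := by
  rw [Metric.mem_ball, Real.dist_eq, abs_lt] at hs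
  linarith [hs.1]

lemma hasDerivAt_E {t : ℝ} (ht : 0 < t) :
    HasDerivAt (Efun u) (∫ x in (0:ℝ)..1, 2 * Wf u (t, x) * Wtf u (t, x)) t := by
  have hδ : 0 < t/2 := by linarith
  have hRO := rect_subset_Od ht
  have hWc : ContinuousOn (fun q : ℝ × ℝ => Wf u q)
      (Icc (t - t/2) (t + t/2) ×ˢ Icc (0:ℝ) 1) := (smoothW hreg).continuousOn.mono hRO
  have hWtc : ContinuousOn (fun q : ℝ × ℝ => Wtf u q)
      (Icc (t - t/2) (t + t/2) ×ˢ Icc (0:ℝ) 1) := (smoothWt hreg).continuousOn.mono hRO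
  have main := hasDerivAt_param_integral (Φ := fun s x => (Wf u (s, x)) ^ 2)
    (Φ' := fun s x => 2 * Wf u (s, x) * Wtf u (s, x)) hδ
    (by exact hWc.pow 2)
    (by exact (continuousOn_const.mul hWc).mul hWtc)
    (by
      intro s hs x _
      have hs0 : 0 < s := ball_pos ht hs
      have h := hasDerivAt_W_t hreg (x := x) hs0
      exact (h.pow 2).congr_deriv (by norm_num))
  apply main.congr_of_eventuallyEq
  filter_upwards [Ioi_mem_nhds ht] with s hs
  unfold Efun
  congr 1
  funext x
  rw [deriv_u_x hreg hs]

lemma hasDerivAt_m {t : ℝ} (ht : 0 < t) :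
    HasDerivAt (mfun u) (∫ x in (0:ℝ)..1, Utf u (t, x)) t := by
  have hδ : 0 < t/2 := by linarith
  have hRO := rect_subset_Od ht
  have hc : ContinuousOn (Function.uncurry u)
      (Icc (t - t/2) (t + t/2) ×ˢ Icc (0:ℝ) 1) :=
    hreg.continuousOn.mono (fun q hq => Od_subset (hRO hq))
  have hUtc : ContinuousOn (fun q : ℝ × ℝ => Utf u q)
      (Icc (t - t/2) (t + t/2) ×ˢ Icc (0:ℝ) 1) := (smoothUt hreg).continuousOn.mono hRO
  exact hasDerivAt_param_integral (Φ := fun s x => u s x)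
    (Φ' := fun s x => Utf u (s, x)) hδ hc hUtc
    (fun s hs x _ => hasDerivAt_u_t hreg (ball_pos ht hs))

lemma hasDerivAt_G (hε : 0 < ε) {t : ℝ} (ht : 0 < t) :
    HasDerivAt (Gfun u ε)
      (∫ x in (0:ℝ)..1, (Wf u (t, x) / bfun ε (Wf u (t, x))) * Wtf u (t, x)) t := by
  have hδ : 0 < t/2 := by linarith
  have hRO := rect_subset_Od ht
  have hWc : ContinuousOn (fun q : ℝ × ℝ => Wf u q)
      (Icc (t - t/2) (t + t/2) ×ˢ Icc (0:ℝ) 1) := (smoothW hreg).continuousOn.mono hRO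
  have hWtc : ContinuousOn (fun q : ℝ × ℝ => Wtf u q)
      (Icc (t - t/2) (t + t/2) ×ˢ Icc (0:ℝ) 1) := (smoothWt hreg).continuousOn.mono hRO
  have main := hasDerivAt_param_integral (Φ := fun s x => bfun ε (Wf u (s, x)))
    (Φ' := fun s x => (Wf u (s, x) / bfun ε (Wf u (s, x))) * Wtf u (s, x)) hδ
    (by exact (continuous_bfun hε).comp_continuousOn hWc)
    (by exact (((continuous_bderiv hε).comp_continuousOn hWc)).mul hWtc)
    (by
      intro s hs x _
      have hs0 : 0 < s := ball_pos ht hs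
      have h := (hasDerivAt_bfun hε (Wf u (s, x))).comp s (hasDerivAt_W_t hreg (x := x) hs0)
      exact h)
  apply main.congr_of_eventuallyEq
  filter_upwards [Ioi_mem_nhds ht] with s hs
  unfold Gfun
  congr 1
  funext x
  rw [deriv_u_x hreg hs]

end functionals
/-- FTC with periodic boundary: integral of the derivative vanishes -/
lemma integral_deriv_zero {f f' : ℝ → ℝ} (hd : ∀ x, HasDerivAt f (f' x) x)
    (hc : Continuous f') (hp : f 1 = f 0) : (∫ x in (0:ℝ)..1, f' x) = 0 := by
  rw [intervalIntegral.integral_eq_sub_of_hasDerivAt (fun x _ => hd x)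
    (hc.intervalIntegrable 0 1), hp, sub_self]

section identities
variable {ν ε : ℝ} {u₀ : ℝ → ℝ} {u : ℝ → ℝ → ℝ}
  (hreg : ContDiffOn ℝ (⊤ : ℕ∞) (Function.uncurry u) (Ici 0 ×ˢ (univ : Set ℝ)))
  (hper : ∀ t x, u t (x + 1) = u t x)
  (hpde : ∀ t x, 0 < t →
    deriv (fun s => u s x) t + u t x * deriv (u t) x = ν * deriv (deriv (u t)) x)
  {t : ℝ} (ht : 0 < t)

include hreg hper ht

lemma ut_periodic1 : u t 1 = u t 0 := by simpa using hper t 0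
lemma W_periodic1 : Wf u (t, 1) = Wf u (t, 0) := by
  simpa using W_periodic hreg hper ht 0
lemma W2_periodic1 : W2f u (t, 1) = W2f u (t, 0) := by
  simpa using W2_periodic hreg hper ht 0

-- continuity of slices
lemma contU : Continuous (u t) := cont_u_slice hreg ht
lemma contWsl : Continuous (fun x => Wf u (t, x)) := cont_slice hreg (smoothW hreg) ht
lemma contW2sl : Continuous (fun x => W2f u (t, x)) := cont_slice hreg (smoothW2 hreg) ht
lemma contW3sl : Continuous (fun x => W3f u (t, x)) := cont_slice hreg (smoothW3 hreg) ht

lemma id1 : (∫ x in (0:ℝ)..1, Wf u (t, x)) = 0 :=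
  integral_deriv_zero (fun x => hasDerivAt_u_x hreg ht) (contWsl hreg hper ht)
    (ut_periodic1 hreg hper ht)

lemma id2 : (∫ x in (0:ℝ)..1, W2f u (t, x)) = 0 :=
  integral_deriv_zero (fun x => hasDerivAt_W_x hreg ht) (contW2sl hreg hper ht)
    (W_periodic1 hreg hper ht)

lemma id3 : (∫ x in (0:ℝ)..1, u t x * Wf u (t, x)) = 0 := by
  have h2 : (∫ x in (0:ℝ)..1, 2 * (u t x * Wf u (t, x))) = 0 := by
    apply integral_deriv_zero (f := fun x => u t x * u t x)
    · intro x
      have := (hasDerivAt_u_x hreg ht (x := x)).mul (hasDerivAt_u_x hreg ht (x := x))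
      exact this.congr_deriv (by ring)
    · exact continuous_const.mul ((contU hreg hper ht).mul (contWsl hreg hper ht))
    · rw [ut_periodic1 hreg hper ht]
  rw [intervalIntegral.integral_const_mul] at h2
  linarith

lemma id5 : (∫ x in (0:ℝ)..1,
    ((Wf u (t, x)) ^ 3 + 2 * (u t x * Wf u (t, x) * W2f u (t, x)))) = 0 := by
  apply integral_deriv_zero (f := fun x => u t x * (Wf u (t, x)) ^ 2)
  · intro x
    have := (hasDerivAt_u_x hreg ht (x := x)).mul
      ((hasDerivAt_W_x hreg ht (x := x)).pow 2)
    exact this.congr_deriv (by norm_num <;> ring)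
  · exact ((contWsl hreg hper ht).pow 3).add (continuous_const.mul
      (((contU hreg hper ht).mul (contWsl hreg hper ht)).mul (contW2sl hreg hper ht)))
  · rw [ut_periodic1 hreg hper ht, W_periodic1 hreg hper ht]

lemma id6 : (∫ x in (0:ℝ)..1,
    ((W2f u (t, x)) ^ 2 + Wf u (t, x) * W3f u (t, x))) = 0 := by
  apply integral_deriv_zero (f := fun x => Wf u (t, x) * W2f u (t, x))
  · intro x
    have := (hasDerivAt_W_x hreg ht (x := x)).mul (hasDerivAt_W2_x hreg ht (x := x))
    exact this.congr_deriv (by ring)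
  · exact (((contW2sl hreg hper ht).pow 2)).add
      ((contWsl hreg hper ht).mul (contW3sl hreg hper ht))
  · rw [W_periodic1 hreg hper ht, W2_periodic1 hreg hper ht]

lemma id7 (hε : 0 < ε) : (∫ x in (0:ℝ)..1,
    ((ε ^ 2 / (bfun ε (Wf u (t, x))) ^ 3) * W2f u (t, x) * W2f u (t, x)
      + (Wf u (t, x) / bfun ε (Wf u (t, x))) * W3f u (t, x))) = 0 := by
  apply integral_deriv_zero
    (f := fun x => (Wf u (t, x) / bfun ε (Wf u (t, x))) * W2f u (t, x))
  · intro x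
    have h1 := (hasDerivAt_bderiv hε (Wf u (t, x))).comp x (hasDerivAt_W_x hreg ht (x := x))
    have := h1.mul (hasDerivAt_W2_x hreg ht (x := x))
    refine this.congr_deriv ?_
    try simp [Function.comp]
    try ring
  · apply Continuous.add
    · exact ((continuous_const.div (((continuous_bfun hε).comp (contWsl hreg hper ht)).pow 3)
        (fun x => pow_ne_zero 3 (bfun_pos hε _).ne')).mul (contW2sl hreg hper ht)).mul
        (contW2sl hreg hper ht)
    · exact (((continuous_bderiv hε).comp (contWsl hreg hper ht)).mul (contW3sl hreg hper ht))
  · rw [W_periodic1 hreg hper ht, W2_periodic1 hreg hper ht]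

lemma id8 (hε : 0 < ε) : (∫ x in (0:ℝ)..1,
    (Wf u (t, x) * bfun ε (Wf u (t, x))
      + u t x * ((Wf u (t, x) / bfun ε (Wf u (t, x))) * W2f u (t, x)))) = 0 := by
  apply integral_deriv_zero (f := fun x => u t x * bfun ε (Wf u (t, x)))
  · intro x
    have h1 := (hasDerivAt_bfun hε (Wf u (t, x))).comp x (hasDerivAt_W_x hreg ht (x := x))
    have := (hasDerivAt_u_x hreg ht (x := x)).mul h1
    refine this.congr_deriv ?_
    try simp [Function.comp]
    try ring
  · apply Continuous.add
    · exact (contWsl hreg hper ht).mul ((continuous_bfun hε).comp (contWsl hreg hper ht))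
    · exact (contU hreg hper ht).mul
        ((((continuous_bderiv hε).comp (contWsl hreg hper ht))).mul (contW2sl hreg hper ht))
  · rw [ut_periodic1 hreg hper ht, W_periodic1 hreg hper ht]

end identities
section assembly
variable {ν ε : ℝ} {u₀ : ℝ → ℝ} {u : ℝ → ℝ → ℝ}
  (hreg : ContDiffOn ℝ (⊤ : ℕ∞) (Function.uncurry u) (Ici 0 ×ˢ (univ : Set ℝ)))
  (hper : ∀ t x, u t (x + 1) = u t x)
  (hpde : ∀ t x, 0 < t →
    deriv (fun s => u s x) t + u t x * deriv (u t) x = ν * deriv (deriv (u t)) x)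
  {t : ℝ} (ht : 0 < t)

include hreg hper hpde ht

lemma m_deriv_eq : (∫ x in (0:ℝ)..1, Utf u (t, x)) = 0 := by
  have hp : ∀ x : ℝ, Utf u (t, x) = ν * W2f u (t, x) - u t x * Wf u (t, x) :=
    fun x => pde' hreg hpde t x ht
  simp only [hp]
  rw [intervalIntegral.integral_sub (f := fun x => ν * W2f u (t, x)) (g := fun x => u t x * Wf u (t, x))
    ((continuous_const.mul (contW2sl hreg hper ht)).intervalIntegrable 0 1)
    (((contU hreg hper ht).mul (contWsl hreg hper ht)).intervalIntegrable 0 1),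
    intervalIntegral.integral_const_mul, id2 hreg hper ht,
    id3 hreg hper ht]
  ring

lemma E_deriv_val :
    (∫ x in (0:ℝ)..1, 2 * Wf u (t, x) * Wtf u (t, x))
      = -2 * ν * (∫ x in (0:ℝ)..1, (W2f u (t, x)) ^ 2)
        - (∫ x in (0:ℝ)..1, (Wf u (t, x)) ^ 3) := by
  have hw : ∀ x : ℝ, 2 * Wf u (t, x) * Wtf u (t, x)
      = 2 * ν * ((W2f u (t, x)) ^ 2 + Wf u (t, x) * W3f u (t, x))
        - ((Wf u (t, x)) ^ 3 + 2 * (u t x * Wf u (t, x) * W2f u (t, x)))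
        - (2 * ν * (W2f u (t, x)) ^ 2 + (Wf u (t, x)) ^ 3) := by
    intro x
    rw [key1 hreg hpde t x ht]
    ring
  simp only [hw]
  have i1 : IntervalIntegrable
      (fun x => 2 * ν * ((W2f u (t, x)) ^ 2 + Wf u (t, x) * W3f u (t, x))) volume 0 1 :=
    (continuous_const.mul (((contW2sl hreg hper ht).pow 2).add
      ((contWsl hreg hper ht).mul (contW3sl hreg hper ht)))).intervalIntegrable 0 1
  have i2 : IntervalIntegrable
      (fun x => (Wf u (t, x)) ^ 3 + 2 * (u t x * Wf u (t, x) * W2f u (t, x))) volume 0 1 :=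
    (((contWsl hreg hper ht).pow 3).add (continuous_const.mul (((contU hreg hper ht).mul
      (contWsl hreg hper ht)).mul (contW2sl hreg hper ht)))).intervalIntegrable 0 1
  have i3 : IntervalIntegrable
      (fun x => 2 * ν * (W2f u (t, x)) ^ 2) volume 0 1 :=
    (continuous_const.mul ((contW2sl hreg hper ht).pow 2)).intervalIntegrable 0 1
  have i4 : IntervalIntegrable (fun x => (Wf u (t, x)) ^ 3) volume 0 1 :=
    ((contWsl hreg hper ht).pow 3).intervalIntegrable 0 1
  rw [intervalIntegral.integral_sub (i1.sub i2) (i3.add i4),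
    intervalIntegral.integral_sub i1 i2,
    intervalIntegral.integral_add i3 i4,
    intervalIntegral.integral_const_mul, intervalIntegral.integral_const_mul,
    id6 hreg hper ht, id5 hreg hper ht]
  ring

lemma G_deriv_le (hν : 0 < ν) (hε : 0 < ε) :
    (∫ x in (0:ℝ)..1, Wf u (t, x) / bfun ε (Wf u (t, x)) * Wtf u (t, x)) ≤ ε ^ 2 := by
  set bW : ℝ → ℝ := fun x => bfun ε (Wf u (t, x)) with hbW
  have hbWpos : ∀ x, 0 < bW x := fun x => bfun_pos hε _
  have hw : ∀ x : ℝ, Wf u (t, x) / bW x * Wtf u (t, x)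
      = ν * ((ε ^ 2 / (bW x) ^ 3) * W2f u (t, x) * W2f u (t, x)
              + (Wf u (t, x) / bW x) * W3f u (t, x))
        - (Wf u (t, x) * bW x + u t x * ((Wf u (t, x) / bW x) * W2f u (t, x)))
        - ν * ((ε ^ 2 / (bW x) ^ 3) * W2f u (t, x) * W2f u (t, x))
        + (Wf u (t, x) * bW x - (Wf u (t, x) / bW x) * (Wf u (t, x)) ^ 2) := by
    intro x
    rw [key1 hreg hpde t x ht]
    have hbx := (hbWpos x).ne'
    field_simp
    ring
  show (∫ x in (0:ℝ)..1, Wf u (t, x) / bW x * Wtf u (t, x)) ≤ ε ^ 2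
  simp only [hw]
  have cb : Continuous bW := (continuous_bfun hε).comp (contWsl hreg hper ht)
  have cbne : ∀ x, bW x ≠ 0 := fun x => (hbWpos x).ne'
  have c1 : Continuous (fun x => (ε ^ 2 / (bW x) ^ 3) * W2f u (t, x) * W2f u (t, x)) :=
    ((continuous_const.div (cb.pow 3) (fun x => pow_ne_zero 3 (cbne x))).mul
      (contW2sl hreg hper ht)).mul (contW2sl hreg hper ht)
  have c2 : Continuous (fun x => (Wf u (t, x) / bW x) * W3f u (t, x)) :=
    (((contWsl hreg hper ht).div cb cbne)).mul (contW3sl hreg hper ht)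
  have c3 : Continuous (fun x => Wf u (t, x) * bW x + u t x * ((Wf u (t, x) / bW x) * W2f u (t, x))) :=
    ((contWsl hreg hper ht).mul cb).add ((contU hreg hper ht).mul
      (((contWsl hreg hper ht).div cb cbne).mul (contW2sl hreg hper ht)))
  have c4 : Continuous (fun x => Wf u (t, x) * bW x - (Wf u (t, x) / bW x) * (Wf u (t, x)) ^ 2) :=
    ((contWsl hreg hper ht).mul cb).sub
      (((contWsl hreg hper ht).div cb cbne).mul ((contWsl hreg hper ht).pow 2))
  have i1 : IntervalIntegrable (fun x => ν * ((ε ^ 2 / (bW x) ^ 3) * W2f u (t, x) * W2f u (t, x)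
      + (Wf u (t, x) / bW x) * W3f u (t, x))) volume 0 1 :=
    (continuous_const.mul (c1.add c2)).intervalIntegrable 0 1
  have i3 : IntervalIntegrable (fun x => ν * ((ε ^ 2 / (bW x) ^ 3) * W2f u (t, x)
      * W2f u (t, x))) volume 0 1 := (continuous_const.mul c1).intervalIntegrable 0 1
  rw [intervalIntegral.integral_add ((i1.sub (c3.intervalIntegrable 0 1)).sub i3)
      (c4.intervalIntegrable 0 1),
    intervalIntegral.integral_sub (i1.sub (c3.intervalIntegrable 0 1)) i3,
    intervalIntegral.integral_sub i1 (c3.intervalIntegrable 0 1),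
    intervalIntegral.integral_const_mul, intervalIntegral.integral_const_mul,
    id7 hreg hper ht hε, id8 hreg hper ht hε]
  have hC : 0 ≤ ∫ x in (0:ℝ)..1, (ε ^ 2 / (bW x) ^ 3) * W2f u (t, x) * W2f u (t, x) := by
    apply intervalIntegral.integral_nonneg zero_le_one
    intro x _
    have : 0 < (bW x) ^ 3 := pow_pos (hbWpos x) 3
    have h1 : 0 ≤ ε ^ 2 / (bW x) ^ 3 := by positivity
    nlinarith [sq_nonneg (W2f u (t, x)), h1]
  have hR : (∫ x in (0:ℝ)..1, (Wf u (t, x) * bW x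
      - (Wf u (t, x) / bW x) * (Wf u (t, x)) ^ 2)) ≤ ε ^ 2 := by
    have := intervalIntegral.integral_mono_on zero_le_one (c4.intervalIntegrable 0 1)
      (_root_.intervalIntegrable_const (μ := volume) (c := ε ^ 2))
      (fun x _ => bfun_pointwise hε (Wf u (t, x)))
    simpa using this
  nlinarith [mul_nonneg hν.le hC]

end assembly
noncomputable def TVfun (u : ℝ → ℝ → ℝ) : ℝ → ℝ :=
  fun t => ∫ x in (0:ℝ)..1, |deriv (u t) x|

section global
variable {ν ε : ℝ} {u₀ : ℝ → ℝ} {u : ℝ → ℝ → ℝ}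
  (hreg : ContDiffOn ℝ (⊤ : ℕ∞) (Function.uncurry u) (Ici 0 ×ˢ (univ : Set ℝ)))
  (hu₀ : ContDiff ℝ (⊤ : ℕ∞) u₀)
  (hper : ∀ t x, u t (x + 1) = u t x)
  (h0 : ∀ x, u 0 x = u₀ x)
  (hmean₀ : (∫ x in (0:ℝ)..1, u₀ x) = 0)
  (hE₀ : (∫ x in (0:ℝ)..1, (deriv u₀ x) ^ 2) ≤ 1)
  (hpde : ∀ t x, 0 < t →
    deriv (fun s => u s x) t + u t x * deriv (u t) x = ν * deriv (deriv (u t)) x)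

include hreg hper hpde

include h0 hmean₀ in
lemma m_zero : ∀ t, 0 ≤ t → mfun u t = 0 := by
  have hm0 : mfun u 0 = 0 := by
    unfold mfun
    have : (fun x => u 0 x) = u₀ := funext h0
    rw [show (∫ x in (0:ℝ)..1, u 0 x) = ∫ x in (0:ℝ)..1, u₀ x by rw [this]]
    exact hmean₀
  intro t ht
  have hup := growth_bound (c := 0) (contm hreg) (fun s hs => hasDerivAt_m hreg hs)
    (fun s hs => le_of_eq (m_deriv_eq hreg hper hpde hs)) ht
  have hdown := growth_bound (c := 0) (f := fun s => -(mfun u s))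
    (f' := fun s => -(∫ x in (0:ℝ)..1, Utf u (s, x)))
    ((contm hreg).neg) (fun s hs => (hasDerivAt_m hreg hs).neg)
    (fun s hs => by rw [m_deriv_eq hreg hper hpde hs]; simp) ht
  simp only [hm0, zero_add, mul_zero, add_zero, zero_mul] at hup hdown
  linarith [hup, hdown]

include hu₀ h0 in
lemma contDeriv_slice : ∀ t, 0 ≤ t → Continuous (fun x => deriv (u t) x) := by
  intro t ht
  rcases eq_or_lt_of_le ht with h | h
  · have : u t = u₀ := by rw [← h]; exact funext h0
    rw [this]
    exact hu₀.continuous_deriv (by simp)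
  · have : (fun x => deriv (u t) x) = fun x => Wf u (t, x) := funext (deriv_u_x hreg h)
    rw [this]
    exact contWsl hreg hper h

include hu₀ h0 in
lemma TV_le_G (hε : 0 < ε) : ∀ t, 0 ≤ t → TVfun u t ≤ Gfun u ε t := by
  intro t ht
  have hc := contDeriv_slice hreg hu₀ hper h0 hpde t ht
  apply intervalIntegral.integral_mono_on zero_le_one
    (hc.abs.intervalIntegrable 0 1)
    (((continuous_bfun hε).comp hc).intervalIntegrable 0 1)
  intro x _
  exact abs_le_bfun hε _

include hu₀ h0 hE₀ in
lemma G0_le (hε : 0 < ε) : Gfun u ε 0 ≤ 1 + ε := by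
  have hu0 : u 0 = u₀ := funext h0
  have hc : Continuous (deriv u₀) := hu₀.continuous_deriv (by simp)
  have h1 : Gfun u ε 0 = ∫ x in (0:ℝ)..1, bfun ε (deriv u₀ x) := by
    unfold Gfun; rw [hu0]
  have h2 : (∫ x in (0:ℝ)..1, bfun ε (deriv u₀ x))
      ≤ ∫ x in (0:ℝ)..1, (|deriv u₀ x| + ε) := by
    apply intervalIntegral.integral_mono_on zero_le_one
      (((continuous_bfun hε).comp hc).intervalIntegrable 0 1)
      ((hc.abs.add continuous_const).intervalIntegrable 0 1)
    intro x _
    exact bfun_le hε _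
  have h3 : (∫ x in (0:ℝ)..1, (|deriv u₀ x| + ε))
      = (∫ x in (0:ℝ)..1, |deriv u₀ x|) + ε := by
    rw [intervalIntegral.integral_add (hc.abs.intervalIntegrable 0 1)
      (_root_.intervalIntegrable_const (μ := volume) (c := ε))]
    simp
  have h4 : (∫ x in (0:ℝ)..1, |deriv u₀ x|) ≤ 1 := by
    calc (∫ x in (0:ℝ)..1, |deriv u₀ x|)
        ≤ Real.sqrt (∫ x in (0:ℝ)..1, (deriv u₀ x) ^ 2) := integral_abs_le_sqrt hc
      _ ≤ Real.sqrt 1 := Real.sqrt_le_sqrt hE₀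
      _ = 1 := Real.sqrt_one
  linarith [h1 ▸ (h2.trans_eq h3), h4]

include hu₀ h0 hE₀ in
lemma TV_le_one (hν : 0 < ν) : ∀ t, 0 ≤ t → TVfun u t ≤ 1 := by
  intro t ht
  have key : ∀ ε, 0 < ε → TVfun u t ≤ 1 + ε + ε ^ 2 * t := by
    intro ε hε
    have hG := growth_bound (c := ε ^ 2) (contG hreg hε)
      (fun s hs => hasDerivAt_G hreg hε hs)
      (fun s hs => G_deriv_le hreg hper hpde hs hν hε) ht
    have := (TV_le_G hreg hu₀ hper h0 hpde hε t ht).trans hG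
    have hg0 := G0_le hreg hu₀ hper h0 hE₀ hpde hε
    calc TVfun u t ≤ Gfun u ε 0 + ε ^ 2 * t := this
      _ ≤ 1 + ε + ε ^ 2 * t := by linarith
  apply le_of_forall_pos_le_add
  intro δ hδ
  set ε := min 1 (δ / (2 * (1 + t))) with hεdef
  have ht1 : 0 < 1 + t := by linarith
  have hε : 0 < ε := lt_min one_pos (by positivity)
  have hε1 : ε ≤ 1 := min_le_left _ _
  have hε2 : ε ≤ δ / (2 * (1 + t)) := min_le_right _ _
  have h := key ε hε
  have hee : ε ^ 2 ≤ ε := by nlinarith [hε.le, hε1]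
  have hsq : ε ^ 2 * t ≤ ε * t := mul_le_mul_of_nonneg_right hee ht
  have h1 : ε + ε ^ 2 * t ≤ ε * (1 + t) := by nlinarith
  have h2 : ε * (1 + t) ≤ δ / 2 := by
    rw [le_div_iff₀ (by positivity : (0:ℝ) < 2 * (1 + t))] at hε2
    nlinarith
  linarith [h, h1, h2, hδ]

end global
section pointwise
variable {ν ε : ℝ} {u₀ : ℝ → ℝ} {u : ℝ → ℝ → ℝ}
  (hreg : ContDiffOn ℝ (⊤ : ℕ∞) (Function.uncurry u) (Ici 0 ×ˢ (univ : Set ℝ)))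
  (hper : ∀ t x, u t (x + 1) = u t x)
  {t : ℝ} (ht : 0 < t)

include hreg hper ht

lemma uIoc_sub {x y : ℝ} (hx : x ∈ Icc (0:ℝ) 1) (hy : y ∈ Icc (0:ℝ) 1) :
    Ι y x ⊆ Ι (0:ℝ) 1 := by
  rw [Set.uIoc_of_le (zero_le_one : (0:ℝ) ≤ 1)]
  intro z hz
  rcases Set.mem_uIoc.1 hz with h | h
  · exact ⟨lt_of_le_of_lt hy.1 h.1, h.2.trans hx.2⟩
  · exact ⟨lt_of_le_of_lt hx.1 h.1, h.2.trans hy.2⟩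

lemma u_pointwise_bound (hm : mfun u t = 0) :
    ∀ x ∈ Icc (0:ℝ) 1, |u t x| ≤ ∫ z in (0:ℝ)..1, |Wf u (t, z)| := by
  have hContW := contWsl hreg hper ht
  have hContU := contU hreg hper ht
  have hTVnn : (0:ℝ) ≤ ∫ z in (0:ℝ)..1, |Wf u (t, z)| :=
    intervalIntegral.integral_nonneg zero_le_one (fun z _ => abs_nonneg _)
  have habs : ∀ x ∈ Icc (0:ℝ) 1, ∀ y ∈ Icc (0:ℝ) 1,
      |u t x - u t y| ≤ ∫ z in (0:ℝ)..1, |Wf u (t, z)| := by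
    intro x hx y hy
    have hftc : (∫ z in y..x, Wf u (t, z)) = u t x - u t y :=
      intervalIntegral.integral_eq_sub_of_hasDerivAt
        (fun z _ => hasDerivAt_u_x hreg ht) (hContW.intervalIntegrable _ _)
    rw [← hftc]
    calc |∫ z in y..x, Wf u (t, z)| ≤ abs (∫ z in y..x, |Wf u (t, z)|) := by
          simpa only [Real.norm_eq_abs] using
            intervalIntegral.norm_integral_le_abs_integral_norm
              (f := fun z => Wf u (t, z)) (a := y) (b := x) (μ := volume)
      _ ≤ abs (∫ z in (0:ℝ)..1, |Wf u (t, z)|) := by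
          apply intervalIntegral.abs_integral_mono_interval
            (uIoc_sub hreg hper ht (x := x) (y := y) hx hy)
            (Filter.Eventually.of_forall (fun z => abs_nonneg _))
            (hContW.abs.intervalIntegrable 0 1)
      _ = ∫ z in (0:ℝ)..1, |Wf u (t, z)| := abs_of_nonneg hTVnn
  intro x hx
  have hrep : (∫ y in (0:ℝ)..1, (u t x - u t y)) = u t x := by
    rw [intervalIntegral.integral_sub
      (_root_.intervalIntegrable_const (μ := volume) (c := u t x))
      (hContU.intervalIntegrable 0 1)]
    have : (∫ y in (0:ℝ)..1, u t y) = 0 := hm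
    rw [this]
    simp
  rw [← hrep]
  have := intervalIntegral.norm_integral_le_of_norm_le_const
    (a := 0) (b := 1) (C := ∫ z in (0:ℝ)..1, |Wf u (t, z)|)
    (f := fun y => u t x - u t y) (by
      intro y hy
      have hyIcc : y ∈ Icc (0:ℝ) 1 := by
        rw [Set.uIoc_of_le (zero_le_one : (0:ℝ) ≤ 1)] at hy
        exact Ioc_subset_Icc_self hy
      simpa [Real.norm_eq_abs] using habs x hx y hyIcc)
  simpa [Real.norm_eq_abs] using this

lemma W_sq_bound :
    ∀ x ∈ Icc (0:ℝ) 1, (Wf u (t, x)) ^ 2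
      ≤ 2 * ∫ z in (0:ℝ)..1, |Wf u (t, z) * W2f u (t, z)| := by
  have hContW := contWsl hreg hper ht
  have hContW2 := contW2sl hreg hper ht
  obtain ⟨x₀, hx₀Icc, hx₀⟩ := exists_zero_of_integral_zero hContW (id1 hreg hper ht)
  intro x hx
  have hd : ∀ z : ℝ, HasDerivAt (fun y => (Wf u (t, y)) ^ 2)
      (2 * (Wf u (t, z) * W2f u (t, z))) z := by
    intro z
    have := (hasDerivAt_W_x hreg ht (x := z)).pow 2
    exact this.congr_deriv (by norm_num <;> ring)
  have hftc : (∫ z in x₀..x, 2 * (Wf u (t, z) * W2f u (t, z)))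
      = (Wf u (t, x)) ^ 2 - (Wf u (t, x₀)) ^ 2 :=
    intervalIntegral.integral_eq_sub_of_hasDerivAt (fun z _ => hd z)
      ((continuous_const.mul (hContW.mul hContW2)).intervalIntegrable _ _)
  have hnn : (0:ℝ) ≤ ∫ z in (0:ℝ)..1, |2 * (Wf u (t, z) * W2f u (t, z))| :=
    intervalIntegral.integral_nonneg zero_le_one (fun z _ => abs_nonneg _)
  have hb : (Wf u (t, x)) ^ 2 - (Wf u (t, x₀)) ^ 2
      ≤ ∫ z in (0:ℝ)..1, |2 * (Wf u (t, z) * W2f u (t, z))| := by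
    rw [← hftc]
    calc (∫ z in x₀..x, 2 * (Wf u (t, z) * W2f u (t, z)))
        ≤ |∫ z in x₀..x, 2 * (Wf u (t, z) * W2f u (t, z))| := le_abs_self _
      _ ≤ abs (∫ z in x₀..x, |2 * (Wf u (t, z) * W2f u (t, z))|) := by
          simpa only [Real.norm_eq_abs] using
            intervalIntegral.norm_integral_le_abs_integral_norm
              (f := fun z => 2 * (Wf u (t, z) * W2f u (t, z))) (a := x₀) (b := x) (μ := volume)
      _ ≤ abs (∫ z in (0:ℝ)..1, |2 * (Wf u (t, z) * W2f u (t, z))|) := by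
          apply intervalIntegral.abs_integral_mono_interval
            (uIoc_sub hreg hper ht (x := x) (y := x₀) hx hx₀Icc)
            (Filter.Eventually.of_forall (fun z => abs_nonneg _))
            ((continuous_const.mul (hContW.mul hContW2)).abs.intervalIntegrable 0 1)
      _ = ∫ z in (0:ℝ)..1, |2 * (Wf u (t, z) * W2f u (t, z))| := abs_of_nonneg hnn
  have he : (∫ z in (0:ℝ)..1, |2 * (Wf u (t, z) * W2f u (t, z))|)
      = 2 * ∫ z in (0:ℝ)..1, |Wf u (t, z) * W2f u (t, z)| := by
    rw [← intervalIntegral.integral_const_mul]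
    congr 1
    funext z
    rw [abs_mul]
    simp [abs_of_nonneg]
  rw [hx₀] at hb
  simp only [ne_eq, OfNat.ofNat_ne_zero, not_false_eq_true, zero_pow, sub_zero] at hb
  linarith [hb, he ▸ hb]

end pointwise
/-- the arithmetic at the heart of the barrier argument -/
lemma arith_neg {ν Ev D P T e : ℝ} (hν : 0 < ν) (hD : 0 ≤ D) (hP : 0 ≤ P)
    (hT0 : 0 ≤ T) (hT : T ≤ 1) (hE : 2 + 2/ν ≤ Ev)
    (he : e ≤ -2*ν*D + 2*(T*P))
    (hP2 : P ≤ Real.sqrt Ev * Real.sqrt D)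
    (hEv : Ev ≤ Real.sqrt (2*P) * T) : e < 0 := by
  have hEvpos : 0 < Ev := lt_of_lt_of_le (by positivity) hE
  set s := Real.sqrt Ev with hs
  set d := Real.sqrt D with hd
  have hs2 : s ^ 2 = Ev := Real.sq_sqrt hEvpos.le
  have hd2 : d ^ 2 = D := Real.sq_sqrt hD
  have hs0 : 0 < s := Real.sqrt_pos.2 hEvpos
  have hd0 : 0 ≤ d := Real.sqrt_nonneg _
  have hsq2P : (Real.sqrt (2*P)) ^ 2 = 2*P := Real.sq_sqrt (by positivity)
  have h2P : Ev ^ 2 ≤ 2 * P := by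
    have h1 : Ev ≤ Real.sqrt (2*P) := by
      calc Ev ≤ Real.sqrt (2*P) * T := hEv
        _ ≤ Real.sqrt (2*P) * 1 := by
            apply mul_le_mul_of_nonneg_left hT (Real.sqrt_nonneg _)
        _ = Real.sqrt (2*P) := mul_one _
    nlinarith [hEvpos.le, Real.sqrt_nonneg (2*P)]
  have hs4 : s ^ 4 ≤ 2 * (s * d) := by nlinarith [hP2, h2P, hs2]
  have hs3d : s ^ 3 ≤ 2 * d := by nlinarith [hs0, hs4]
  have hA : 2 * ν + 2 ≤ ν * Ev := by
    have h2 : ν * (2/ν) = 2 := by field_simp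
    nlinarith [hE, hν]
  have hC : ν * s ^ 3 = s * (ν * Ev) := by rw [← hs2]; ring
  have hνd : s * (ν + 1) ≤ ν * d := by
    have h1 : s * (2 * ν + 2) ≤ s * (ν * Ev) := mul_le_mul_of_nonneg_left hA hs0.le
    have h2 : ν * s ^ 3 ≤ 2 * (ν * d) := by nlinarith [hs3d, hν.le]
    nlinarith [h1, h2, hC]
  have hdpos : 0 < d := by nlinarith [hs3d, pow_pos hs0 3]
  have hTP : T * P ≤ P := by nlinarith
  have hPsd : P ≤ s * d := hP2
  nlinarith [he, hTP, hPsd, hνd, hdpos, hs0, hν, mul_pos hdpos hs0, mul_pos (mul_pos hdpos hs0) hν]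

section eneg
variable {ν : ℝ} {u₀ : ℝ → ℝ} {u : ℝ → ℝ → ℝ}
  (hreg : ContDiffOn ℝ (⊤ : ℕ∞) (Function.uncurry u) (Ici 0 ×ˢ (univ : Set ℝ)))
  (hu₀ : ContDiff ℝ (⊤ : ℕ∞) u₀)
  (hper : ∀ t x, u t (x + 1) = u t x)
  (h0 : ∀ x, u 0 x = u₀ x)
  (hmean₀ : (∫ x in (0:ℝ)..1, u₀ x) = 0)
  (hE₀ : (∫ x in (0:ℝ)..1, (deriv u₀ x) ^ 2) ≤ 1)
  (hpde : ∀ t x, 0 < t →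
    deriv (fun s => u s x) t + u t x * deriv (u t) x = ν * deriv (deriv (u t)) x)
  (hν : 0 < ν) {t : ℝ} (ht : 0 < t)

include hreg hu₀ hper h0 hmean₀ hE₀ hpde hν ht

lemma e_neg (hB : 2 + 2/ν ≤ Efun u t) :
    (∫ x in (0:ℝ)..1, 2 * Wf u (t, x) * Wtf u (t, x)) < 0 := by
  have hContW := contWsl hreg hper ht
  have hContW2 := contW2sl hreg hper ht
  have hContU := contU hreg hper ht
  set Ev := ∫ x in (0:ℝ)..1, (Wf u (t, x)) ^ 2 with hEv
  set D := ∫ x in (0:ℝ)..1, (W2f u (t, x)) ^ 2 with hD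
  set P := ∫ x in (0:ℝ)..1, |Wf u (t, x) * W2f u (t, x)| with hP
  set T := TVfun u t with hT
  have hE_eq : Efun u t = Ev := by
    unfold Efun
    congr 1
    funext x
    rw [deriv_u_x hreg ht]
  have hTV_eq : T = ∫ x in (0:ℝ)..1, |Wf u (t, x)| := by
    rw [hT]
    unfold TVfun
    congr 1
    funext x
    rw [deriv_u_x hreg ht]
  have hDnn : 0 ≤ D := intervalIntegral.integral_nonneg zero_le_one (fun x _ => sq_nonneg _)
  have hPnn : 0 ≤ P := intervalIntegral.integral_nonneg zero_le_one (fun x _ => abs_nonneg _)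
  have hTnn : 0 ≤ T := by
    rw [hTV_eq]
    exact intervalIntegral.integral_nonneg zero_le_one (fun x _ => abs_nonneg _)
  have hT1 : T ≤ 1 := TV_le_one hreg hu₀ hper h0 hE₀ hpde hν t ht.le
  -- the value of E'
  have heval := E_deriv_val hreg hper hpde ht
  -- I3 = -2 ∫ u W W2
  have hI3 : (∫ x in (0:ℝ)..1, (Wf u (t, x)) ^ 3)
      = -2 * ∫ x in (0:ℝ)..1, u t x * Wf u (t, x) * W2f u (t, x) := by
    have hsplit := id5 hreg hper ht
    rw [intervalIntegral.integral_add (f := fun x => (Wf u (t, x)) ^ 3) (g := fun x => 2 * (u t x * Wf u (t, x) * W2f u (t, x))) (((contWsl hreg hper ht).pow 3).intervalIntegrable 0 1)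
      ((continuous_const.mul (((contU hreg hper ht).mul (contWsl hreg hper ht)).mul
        (contW2sl hreg hper ht))).intervalIntegrable 0 1),
      intervalIntegral.integral_const_mul] at hsplit
    linarith
  -- |∫ u W W2| ≤ T * P
  have hUbd := u_pointwise_bound hreg hper ht
    (m_zero hreg hper h0 hmean₀ hpde t ht.le)
  have hI3bd : |∫ x in (0:ℝ)..1, u t x * Wf u (t, x) * W2f u (t, x)| ≤ T * P := by
    calc |∫ x in (0:ℝ)..1, u t x * Wf u (t, x) * W2f u (t, x)|
        ≤ ∫ x in (0:ℝ)..1, |u t x * Wf u (t, x) * W2f u (t, x)| :=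
          intervalIntegral.abs_integral_le_integral_abs zero_le_one
      _ ≤ ∫ x in (0:ℝ)..1, T * |Wf u (t, x) * W2f u (t, x)| := by
          apply intervalIntegral.integral_mono_on zero_le_one
            (((hContU.mul hContW).mul hContW2).abs.intervalIntegrable 0 1)
            ((continuous_const.mul (hContW.mul hContW2).abs).intervalIntegrable 0 1)
          intro x hx
          show |u t x * Wf u (t, x) * W2f u (t, x)| ≤ T * |Wf u (t, x) * W2f u (t, x)|
          rw [mul_assoc, abs_mul]
          apply mul_le_mul_of_nonneg_right _ (abs_nonneg _)
          rw [hTV_eq]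
          exact hUbd x hx
      _ = T * P := by rw [intervalIntegral.integral_const_mul]
  -- P ≤ √Ev √D
  have hP2 : P ≤ Real.sqrt Ev * Real.sqrt D := by
    have h := integral_mul_le_sqrt_mul_sqrt (f := fun x => |Wf u (t, x)|)
      (g := fun x => |W2f u (t, x)|) hContW.abs hContW2.abs
    have e1 : (∫ x in (0:ℝ)..1, |Wf u (t, x)| * |W2f u (t, x)|) = P := by
      rw [hP]; congr 1; funext x; rw [abs_mul]
    have e2 : (∫ x in (0:ℝ)..1, |Wf u (t, x)| ^ 2) = Ev := by
      rw [hEv]; congr 1; funext x; rw [sq_abs]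
    have e3 : (∫ x in (0:ℝ)..1, |W2f u (t, x)| ^ 2) = D := by
      rw [hD]; congr 1; funext x; rw [sq_abs]
    rw [e1, e2, e3] at h
    exact h
  -- Ev ≤ √(2P) T
  have hEvbd : Ev ≤ Real.sqrt (2 * P) * T := by
    have hWsq := W_sq_bound hreg hper ht
    have hpt : ∀ x ∈ Icc (0:ℝ) 1, (Wf u (t, x)) ^ 2 ≤ Real.sqrt (2 * P) * |Wf u (t, x)| := by
      intro x hx
      have h1 : (Wf u (t, x)) ^ 2 ≤ 2 * P := hWsq x hx
      have h2 : |Wf u (t, x)| ≤ Real.sqrt (2 * P) := by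
        rw [← Real.sqrt_sq_eq_abs]
        exact Real.sqrt_le_sqrt h1
      calc (Wf u (t, x)) ^ 2 = |Wf u (t, x)| * |Wf u (t, x)| := by
            rw [← sq_abs, sq]
        _ ≤ Real.sqrt (2 * P) * |Wf u (t, x)| :=
            mul_le_mul_of_nonneg_right h2 (abs_nonneg _)
    calc Ev ≤ ∫ x in (0:ℝ)..1, Real.sqrt (2 * P) * |Wf u (t, x)| := by
          apply intervalIntegral.integral_mono_on zero_le_one
            ((hContW.pow 2).intervalIntegrable 0 1)
            ((continuous_const.mul hContW.abs).intervalIntegrable 0 1) hpt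
      _ = Real.sqrt (2 * P) * T := by
          rw [intervalIntegral.integral_const_mul, hTV_eq]
  rw [hE_eq] at hB
  rw [heval]
  have he : -2 * ν * D - (∫ x in (0:ℝ)..1, (Wf u (t, x)) ^ 3) ≤ -2*ν*D + 2*(T*P) := by
    rw [hI3]
    have h2 := (le_abs_self (∫ x in (0:ℝ)..1, u t x * Wf u (t, x) * W2f u (t, x))).trans hI3bd
    linarith
  exact lt_of_le_of_lt (le_refl _)
    (arith_neg hν hDnn hPnn hTnn hT1 hB he hP2 hEvbd)

end eneg
theorem enstrophy_main :
    ∃ C₀ : ℝ, 0 < C₀ ∧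
      ∀ (ν : ℝ), 0 < ν →
      ∀ (u₀ : ℝ → ℝ) (u : ℝ → ℝ → ℝ),
        ContDiff ℝ (⊤ : ℕ∞) u₀ →
        (∀ x, u₀ (x + 1) = u₀ x) →
        (∫ x in (0:ℝ)..1, u₀ x) = 0 →
        (∫ x in (0:ℝ)..1, (deriv u₀ x) ^ 2) ≤ 1 →
        ContDiffOn ℝ (⊤ : ℕ∞) (Function.uncurry u) (Set.Ici 0 ×ˢ Set.univ) →
        (∀ t x, u t (x + 1) = u t x) →
        (∀ x, u 0 x = u₀ x) →
        (∀ t x, 0 < t →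
          deriv (fun s => u s x) t + u t x * deriv (u t) x
            = ν * deriv (deriv (u t)) x) →
        ∀ t, 0 ≤ t →
          (∫ x in (0:ℝ)..1, (deriv (u t) x) ^ 2) ≤ C₀ * (1 + ν⁻¹) := by
  refine ⟨2, two_pos, ?_⟩
  intro ν hν u₀ u hu₀ hper₀ hmean₀ hE₀ hreg hper h0 hpde t ht
  have hf0 : Efun u 0 ≤ 2 + 2/ν := by
    have hu0 : u 0 = u₀ := funext h0
    have h1 : Efun u 0 = ∫ x in (0:ℝ)..1, (deriv u₀ x) ^ 2 := by
      unfold Efun; rw [hu0]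
    have h2 : (0:ℝ) < 2/ν := by positivity
    linarith [h1 ▸ hE₀]
  have hbar := barrier (f := Efun u)
    (f' := fun s => ∫ x in (0:ℝ)..1, 2 * Wf u (s, x) * Wtf u (s, x))
    (B := 2 + 2/ν) (contE hreg) hf0
    (fun s hs => hasDerivAt_E hreg hs)
    (fun s hs hB => e_neg hreg hu₀ hper h0 hmean₀ hE₀ hpde hν hs hB)
  have := hbar t ht
  have heq : Efun u t = ∫ x in (0:ℝ)..1, (deriv (u t) x) ^ 2 := rfl
  rw [heq] at this
  have : (2:ℝ) + 2/ν = 2 * (1 + ν⁻¹) := by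
    rw [div_eq_mul_inv]; ring
  linarith [hbar t ht, this]









end BurgersAux


/-- **Theorem (Upper bound on enstrophy growth for viscous Burgers).**
Functions on the unit circle 𝕋 = ℝ/ℤ are modelled as 1-periodic functions on ℝ,
with integrals over the fundamental domain `[0,1]`. -/
theorem enstrophy_upper_bound_burgers :
    ∃ C₀ : ℝ, 0 < C₀ ∧
      ∀ (ν : ℝ), 0 < ν →
      ∀ (u₀ : ℝ → ℝ) (u : ℝ → ℝ → ℝ),
        ContDiff ℝ (⊤ : ℕ∞) u₀ →
        (∀ x, u₀ (x + 1) = u₀ x) →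
        (∫ x in (0:ℝ)..1, u₀ x) = 0 →
        (∫ x in (0:ℝ)..1, (deriv u₀ x) ^ 2) ≤ 1 →
        ContDiffOn ℝ (⊤ : ℕ∞) (Function.uncurry u) (Set.Ici 0 ×ˢ Set.univ) →
        (∀ t x, u t (x + 1) = u t x) →
        (∀ x, u 0 x = u₀ x) →
        (∀ t x, 0 < t →
          deriv (fun s => u s x) t + u t x * deriv (u t) x
            = ν * deriv (deriv (u t)) x) →
        ∀ t, 0 ≤ t →
          (∫ x in (0:ℝ)..1, (deriv (u t) x) ^ 2) ≤ C₀ * (1 + ν⁻¹) := by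
  exact BurgersAux.enstrophy_main
end

section
/- For every n ≥ 1 there exists a constant C > 0, depending only on n, such that for every ν > 0, t > 0, and every bounded function v₀ ∈ W^{1,1}(ℝⁿ), the function w := Φ_{νt} ∗ v₀ satisfies ‖∇w‖_{L²(ℝⁿ)} ≤ C (νt)^{-1/4} ‖v₀‖_{L^∞}^{1/2} ‖∇v₀‖_{L¹}^{1/2}. -/
/-!
Write `w = Φ_s ∗ v₀` with `s = νt`. Differentiating under the integral, `∇w = v₀ ∗ ∇Φ_s`, so
`‖∇w‖_∞ ≤ ‖v₀‖_∞ ‖∇Φ_s‖_{L¹}`, and parabolic scaling gives `‖∇Φ_s‖_{L¹} = s^{-1/2} ‖∇Φ_1‖_{L¹}`.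
On the other hand, convolution with the probability density `Φ_s` does not increase the `L¹` norm
of the increments `v₀(· + z) - v₀`, which is at most `|z| ‖∇v₀‖_{L¹}`; by Fatou's lemma applied
to difference quotients, every partial derivative of `w` then has `L¹` norm at most
`‖∇v₀‖_{L¹}`, so `‖∇w‖_{L¹} ≤ n ‖∇v₀‖_{L¹}`. Conclude with
`‖∇w‖²_{L²} ≤ ‖∇w‖_∞ ‖∇w‖_{L¹}`.
-/

open MeasureTheory

/-- The heat kernel `Φ_s(x) = (4πs)^{-n/2} exp(-|x|²/(4s))` on `ℝⁿ`. -/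
noncomputable def heatKernel (n : ℕ) (s : ℝ) (x : EuclideanSpace ℝ (Fin n)) : ℝ :=
  (4 * Real.pi * s) ^ (-(n : ℝ) / 2) * Real.exp (-‖x‖ ^ 2 / (4 * s))

/-- The heat evolution `(Φ_s ∗ v)(x) = ∫ Φ_s(x − y) v(y) dy`, representing `e^{sΔ}v`. -/
noncomputable def heatConv {n : ℕ} (s : ℝ) (v : EuclideanSpace ℝ (Fin n) → ℝ)
    (x : EuclideanSpace ℝ (Fin n)) : ℝ :=
  ∫ y, heatKernel n s (x - y) * v y

open Real Set Filter Topology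

section Translation

variable {E F : Type*} [NormedAddCommGroup E] [NormedSpace ℝ E] [MeasurableSpace E]
  [BorelSpace E] [NormedAddCommGroup F] [NormedSpace ℝ F]

theorem lintegral_enorm_fderiv_apply_le {μ : Measure E} {w : E → F} (hw : Differentiable ℝ w)
    {G : ENNReal} (hG : ∀ z, ∫⁻ x, ‖w (x + z) - w x‖ₑ ∂μ ≤ ‖z‖ₑ * G) (e : E) :
    ∫⁻ x, ‖fderiv ℝ w x e‖ₑ ∂μ ≤ ‖e‖ₑ * G := by
  set u : ℕ → ℝ := fun k => 1 / (k + 1)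
  have hu_pos (k : ℕ) : 0 < u k := by positivity
  set q : ℕ → E → F := fun k x => (u k)⁻¹ • (w (x + u k • e) - w x)
  have hq_tendsto (x : E) : Tendsto (fun k => q k x) atTop (𝓝 (fderiv ℝ w x e)) := by
    have hline : HasDerivAt (fun t : ℝ => w (x + t • e)) (fderiv ℝ w x e) 0 := by
      have := (hw (x + (0 : ℝ) • e)).hasFDerivAt.comp_hasDerivAt (0 : ℝ)
        (((hasDerivAt_id (0 : ℝ)).smul_const e).const_add x)
      simpa [Function.comp_def] using this
    have hu : Tendsto u atTop (𝓝[≠] 0) :=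
      tendsto_nhdsWithin_of_tendsto_nhds_of_eventually_within u
        tendsto_one_div_add_atTop_nhds_zero_nat (.of_forall fun k => (hu_pos k).ne')
    simpa [Function.comp_def, slope_def_module, q] using
      (hasDerivAt_iff_tendsto_slope.1 hline).comp hu
  have hq_meas (k : ℕ) : Measurable fun x => ‖q k x‖ₑ := by
    have := hw.continuous
    exact (by fun_prop : Continuous fun x => ‖q k x‖ₑ).measurable
  have hq_int (k : ℕ) : ∫⁻ x, ‖q k x‖ₑ ∂μ ≤ ‖e‖ₑ * G := by
    simp_rw [q, enorm_smul]
    rw [lintegral_const_mul' _ _ enorm_ne_top]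
    calc ‖(u k)⁻¹‖ₑ * ∫⁻ x, ‖w (x + u k • e) - w x‖ₑ ∂μ
        ≤ ‖(u k)⁻¹‖ₑ * (‖u k • e‖ₑ * G) := by gcongr; exact hG _
      _ = ‖e‖ₑ * G := by
        rw [enorm_smul, ← mul_assoc, ← mul_assoc, ← enorm_mul, inv_mul_cancel₀ (hu_pos k).ne',
          enorm_one, one_mul]
  calc ∫⁻ x, ‖fderiv ℝ w x e‖ₑ ∂μ = ∫⁻ x, liminf (fun k => ‖q k x‖ₑ) atTop ∂μ :=
        lintegral_congr fun x => ((continuous_enorm.tendsto _).comp (hq_tendsto x)).liminf_eq.symm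
    _ ≤ liminf (fun k => ∫⁻ x, ‖q k x‖ₑ ∂μ) atTop := lintegral_liminf_le hq_meas
    _ ≤ ‖e‖ₑ * G := liminf_le_of_frequently_le' (.of_forall hq_int)

variable [CompleteSpace F]

theorem enorm_sub_le_lintegral_enorm_fderiv {f : E → F} (hf : Differentiable ℝ f) (y z : E) :
    ‖f (y + z) - f y‖ₑ ≤ ∫⁻ t in Ioc (0 : ℝ) 1, ‖fderiv ℝ f (y + t • z)‖ₑ * ‖z‖ₑ := by
  set B : ℝ → ℝ := fun t => ‖fderiv ℝ f (y + t • z)‖ * ‖z‖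
  have hline : Continuous fun t : ℝ => y + t • z := by fun_prop
  have hderiv (t : ℝ) : HasDerivAt (fun t : ℝ => f (y + t • z)) (fderiv ℝ f (y + t • z) z) t := by
    have := (hf _).hasFDerivAt.comp_hasDerivAt t (((hasDerivAt_id t).smul_const z).const_add y)
    simpa [Function.comp_def] using this
  have hlB : ∫⁻ t in Ioc (0 : ℝ) 1, ‖fderiv ℝ f (y + t • z)‖ₑ * ‖z‖ₑ
      = ∫⁻ t in Ioc (0 : ℝ) 1, ENNReal.ofReal (B t) := by
    simp only [B, ENNReal.ofReal_mul (norm_nonneg _), ofReal_norm]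
  rw [hlB]
  by_cases hfin : ∫⁻ t in Ioc (0 : ℝ) 1, ENNReal.ofReal (B t) = ⊤
  · exact hfin ▸ le_top
  have hBint : IntegrableOn B (Ioc 0 1) := by
    refine ⟨(((measurable_fderiv ℝ f).comp hline.measurable).norm.mul_const _).aestronglyMeasurable,
      ?_⟩
    rw [hasFiniteIntegral_iff_ofReal (.of_forall fun t => by positivity)]
    exact lt_top_iff_ne_top.2 hfin
  have hle : ‖f (y + z) - f y‖ ≤ ∫ t in (0 : ℝ)..1, B t := by
    simpa using norm_sub_le_integral_of_norm_deriv_le_of_le (f := fun t : ℝ => f (y + t • z))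
      zero_le_one (hf.continuous.comp hline).continuousOn
      (fun t _ => (hderiv t).differentiableAt.differentiableWithinAt)
      (.of_forall fun t _ => (hderiv t).deriv ▸ (fderiv ℝ f _).le_opNorm z)
      ((intervalIntegrable_iff_integrableOn_Ioc_of_le zero_le_one).2 hBint)
  rw [← ofReal_norm,
    ← ofReal_integral_eq_lintegral_ofReal hBint (.of_forall fun t => by positivity),
    ← intervalIntegral.integral_of_le zero_le_one]
  exact ENNReal.ofReal_le_ofReal hle

variable [SecondCountableTopology E] {μ : Measure E} [SFinite μ] [μ.IsAddRightInvariant]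

theorem lintegral_enorm_sub_comp_add_le {f : E → F} (hf : Differentiable ℝ f) (z : E) :
    ∫⁻ y, ‖f (y + z) - f y‖ₑ ∂μ ≤ ‖z‖ₑ * ∫⁻ x, ‖fderiv ℝ f x‖ₑ ∂μ := by
  have hmeas : Measurable fun p : E × ℝ => ‖fderiv ℝ f (p.1 + p.2 • z)‖ₑ * ‖z‖ₑ :=
    ((measurable_fderiv ℝ f).comp (by fun_prop)).enorm.mul_const _
  calc ∫⁻ y, ‖f (y + z) - f y‖ₑ ∂μ
      ≤ ∫⁻ y, (∫⁻ t in Ioc (0 : ℝ) 1, ‖fderiv ℝ f (y + t • z)‖ₑ * ‖z‖ₑ) ∂μ :=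
        lintegral_mono fun y => enorm_sub_le_lintegral_enorm_fderiv hf y z
    _ = ∫⁻ t in Ioc (0 : ℝ) 1, ∫⁻ y, ‖fderiv ℝ f (y + t • z)‖ₑ * ‖z‖ₑ ∂μ :=
        lintegral_lintegral_swap hmeas.aemeasurable
    _ = ‖z‖ₑ * ∫⁻ x, ‖fderiv ℝ f x‖ₑ ∂μ := by
        simp_rw [lintegral_mul_const' _ _ enorm_ne_top,
          lintegral_add_right_eq_self (fun x => ‖fderiv ℝ f x‖ₑ), setLIntegral_const,
          Real.volume_Ioc]
        simp [mul_comm]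

end Translation

section Euclidean

variable {ι F : Type*} [Fintype ι] [DecidableEq ι] [NormedAddCommGroup F] [NormedSpace ℝ F]

theorem ContinuousLinearMap.norm_le_sum_norm_apply_single (f : EuclideanSpace ℝ ι →L[ℝ] F) :
    ‖f‖ ≤ ∑ i, ‖f (EuclideanSpace.single i 1)‖ := by
  refine f.opNorm_le_bound (by positivity) fun ξ => ?_
  calc ‖f ξ‖ = ‖∑ i, ξ i • f (EuclideanSpace.single i 1)‖ := by
        conv_lhs => rw [← (EuclideanSpace.basisFun ι ℝ).sum_repr ξ]
        simp [map_sum]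
    _ ≤ ∑ i, ‖ξ‖ * ‖f (EuclideanSpace.single i 1)‖ := by
        refine norm_sum_le_of_le _ fun i _ => ?_
        rw [norm_smul]
        gcongr
        exact PiLp.norm_apply_le ξ i
    _ = (∑ i, ‖f (EuclideanSpace.single i 1)‖) * ‖ξ‖ := by
        rw [Finset.sum_mul]; simp_rw [mul_comm]

theorem lintegral_enorm_fderiv_le_card_mul [CompleteSpace F] {μ : Measure (EuclideanSpace ℝ ι)}
    {w : EuclideanSpace ℝ ι → F} (hw : Differentiable ℝ w) {G : ENNReal}
    (hG : ∀ z, ∫⁻ x, ‖w (x + z) - w x‖ₑ ∂μ ≤ ‖z‖ₑ * G) :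
    ∫⁻ x, ‖fderiv ℝ w x‖ₑ ∂μ ≤ Fintype.card ι * G := by
  have hmeas (e : EuclideanSpace ℝ ι) : Measurable fun x => ‖fderiv ℝ w x e‖ₑ :=
    (by fun_prop : Continuous fun L : EuclideanSpace ℝ ι →L[ℝ] F => ‖L e‖ₑ).measurable.comp
      (measurable_fderiv ℝ w)
  calc ∫⁻ x, ‖fderiv ℝ w x‖ₑ ∂μ
      ≤ ∫⁻ x, ∑ i, ‖fderiv ℝ w x (EuclideanSpace.single i 1)‖ₑ ∂μ := by
        refine lintegral_mono fun x => ?_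
        simp_rw [← ofReal_norm]
        rw [← ENNReal.ofReal_sum_of_nonneg fun i _ => norm_nonneg _]
        exact ENNReal.ofReal_le_ofReal (fderiv ℝ w x).norm_le_sum_norm_apply_single
    _ = ∑ i, ∫⁻ x, ‖fderiv ℝ w x (EuclideanSpace.single i 1)‖ₑ ∂μ :=
        lintegral_finsetSum _ fun i _ => hmeas _
    _ ≤ ∑ _i : ι, G := by
        refine Finset.sum_le_sum fun i _ => ?_
        have hsingle : ‖EuclideanSpace.single i (1 : ℝ)‖ₑ = 1 := by
          rw [← ofReal_norm, PiLp.norm_single]; simp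
        simpa [hsingle] using lintegral_enorm_fderiv_apply_le hw hG (EuclideanSpace.single i 1)
    _ = Fintype.card ι * G := by simp

end Euclidean

section KernelConvolution

variable {G : Type*} [AddGroup G] [MeasurableSpace G] {μ : Measure G} {K v : G → ℝ}

theorem integral_kernel_mul_sub_comp_add [MeasurableAdd G] [μ.IsAddRightInvariant]
    (hKv : ∀ x, Integrable (fun y => K (x - y) * v y) μ) (x z : G) :
    ∫ y, K (x + z - y) * v y ∂μ - ∫ y, K (x - y) * v y ∂μ
      = ∫ y, K (x - y) * (v (y + z) - v y) ∂μ := by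
  have hshift : ∫ y, K (x + z - y) * v y ∂μ = ∫ y, K (x - y) * v (y + z) ∂μ := by
    rw [← integral_add_right_eq_self _ z]
    simp_rw [add_sub_add_right_eq_sub]
  have hint : Integrable (fun y => K (x - y) * v (y + z)) μ := by
    simpa [add_sub_add_right_eq_sub] using (hKv (x + z)).comp_add_right z
  rw [hshift, ← integral_sub hint (hKv x)]
  simp_rw [mul_sub]

theorem lintegral_enorm_kernel_conv_sub_le [MeasurableAdd G] [MeasurableSub₂ G] [SFinite μ]
    [μ.IsAddRightInvariant] (hK : Measurable K) (hv : Measurable v)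
    (hKv : ∀ x, Integrable (fun y => K (x - y) * v y) μ) (z : G) :
    ∫⁻ x, ‖∫ y, K (x + z - y) * v y ∂μ - ∫ y, K (x - y) * v y ∂μ‖ₑ ∂μ
      ≤ (∫⁻ x, ‖K x‖ₑ ∂μ) * ∫⁻ y, ‖v (y + z) - v y‖ₑ ∂μ := by
  have hΔ : Measurable fun y => ‖v (y + z) - v y‖ₑ := by fun_prop
  have hmeas : Measurable fun p : G × G => ‖K (p.1 - p.2)‖ₑ * ‖v (p.2 + z) - v p.2‖ₑ :=
    (hK.comp measurable_sub).enorm.mul (hΔ.comp measurable_snd)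
  calc ∫⁻ x, ‖∫ y, K (x + z - y) * v y ∂μ - ∫ y, K (x - y) * v y ∂μ‖ₑ ∂μ
      ≤ ∫⁻ x, ∫⁻ y, ‖K (x - y)‖ₑ * ‖v (y + z) - v y‖ₑ ∂μ ∂μ := by
        refine lintegral_mono fun x => ?_
        rw [integral_kernel_mul_sub_comp_add hKv]
        exact (enorm_integral_le_lintegral_enorm _).trans_eq (by simp_rw [enorm_mul])
    _ = ∫⁻ y, ∫⁻ x, ‖K (x - y)‖ₑ * ‖v (y + z) - v y‖ₑ ∂μ ∂μ :=
        lintegral_lintegral_swap hmeas.aemeasurable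
    _ = (∫⁻ x, ‖K x‖ₑ ∂μ) * ∫⁻ y, ‖v (y + z) - v y‖ₑ ∂μ := by
        simp_rw [lintegral_mul_const' _ _ enorm_ne_top,
          lintegral_sub_right_eq_self (fun x => ‖K x‖ₑ)]
        exact lintegral_const_mul _ hΔ

theorem norm_integral_smul_comp_sub_le [MeasurableAdd G] [MeasurableNeg G]
    [μ.IsAddLeftInvariant] [μ.IsNegInvariant]
    {F : Type*} [NormedAddCommGroup F] [NormedSpace ℝ F] {L : G → F} (hL : Integrable L μ)
    {M : ℝ} (hvM : ∀ y, ‖v y‖ ≤ M) (x : G) :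
    ‖∫ y, v y • L (x - y) ∂μ‖ ≤ M * ∫ y, ‖L y‖ ∂μ := by
  calc ‖∫ y, v y • L (x - y) ∂μ‖ ≤ ∫ y, M * ‖L (x - y)‖ ∂μ := by
        refine norm_integral_le_of_norm_le ((hL.comp_sub_left x).norm.const_mul M)
          (.of_forall fun y => ?_)
        rw [norm_smul]
        exact mul_le_mul_of_nonneg_right (hvM y) (norm_nonneg _)
    _ = M * ∫ y, ‖L y‖ ∂μ := by
        rw [integral_const_mul, integral_sub_left_eq_self (fun y => ‖L y‖) μ x]

end KernelConvolution

theorem hasFDerivAt_integral_kernel_mul {E : Type*} [NormedAddCommGroup E] [NormedSpace ℝ E]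
    [FiniteDimensional ℝ E] [MeasurableSpace E] [BorelSpace E] {μ : Measure E} {K v : E → ℝ}
    {K' : E → E →L[ℝ] ℝ} (hK : ∀ x, HasFDerivAt K (K' x) x)
    (hK' : Continuous K') {B : ℝ} (hK'B : ∀ x, ‖K' x‖ ≤ B) (hv : Integrable v μ)
    (hKv : ∀ x, Integrable (fun y => K (x - y) * v y) μ) (x : E) :
    HasFDerivAt (fun x => ∫ y, K (x - y) * v y ∂μ) (∫ y, v y • K' (x - y) ∂μ) x := by
  refine hasFDerivAt_integral_of_dominated_of_fderiv_le (bound := fun y => ‖v y‖ * B)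
    (F' := fun x y => v y • K' (x - y)) univ_mem
    (.of_forall fun x => (hKv x).aestronglyMeasurable) (hKv x)
    (hv.aestronglyMeasurable.smul
      (by fun_prop : Continuous fun y => K' (x - y)).aestronglyMeasurable)
    (.of_forall fun y x _ => ?_) (hv.norm.mul_const B) (.of_forall fun y x _ => ?_)
  · rw [norm_smul]
    exact mul_le_mul_of_nonneg_left (hK'B _) (norm_nonneg _)
  · simpa using ((hK (x - y)).comp x ((hasFDerivAt_id x).sub_const y)).mul_const (v y)

theorem integral_norm_sq_le_mul_integral_norm {α F : Type*} [MeasurableSpace α] {μ : Measure α}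
    [NormedAddCommGroup F] {f : α → F} (hf : Integrable f μ) {A : ℝ} (hA : ∀ x, ‖f x‖ ≤ A) :
    ∫ x, ‖f x‖ ^ 2 ∂μ ≤ A * ∫ x, ‖f x‖ ∂μ := by
  rw [← integral_const_mul]
  refine integral_mono_of_nonneg (.of_forall fun x => by positivity) (hf.norm.const_mul A)
    (.of_forall fun x => ?_)
  change ‖f x‖ ^ 2 ≤ A * ‖f x‖
  rw [sq]
  exact mul_le_mul_of_nonneg_right (hA x) (norm_nonneg _)

theorem mul_exp_neg_mul_sq_le {b : ℝ} (hb : 0 < b) (r : ℝ) :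
    r * exp (-b * r ^ 2) ≤ (1 + 2 / b) * exp (-(b / 2) * r ^ 2) := by
  have hr : r ≤ (1 + 2 / b) * exp (b / 2 * r ^ 2) := by
    have h1 := add_one_le_exp (b / 2 * r ^ 2)
    have h2 : 2 / b * (b / 2 * r ^ 2) = r ^ 2 := by field_simp
    nlinarith [sq_nonneg (r - 1 / 2), div_pos two_pos hb, exp_pos (b / 2 * r ^ 2)]
  calc r * exp (-b * r ^ 2) ≤ (1 + 2 / b) * exp (b / 2 * r ^ 2) * exp (-b * r ^ 2) :=
        mul_le_mul_of_nonneg_right hr (exp_pos _).le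
    _ = (1 + 2 / b) * exp (-(b / 2) * r ^ 2) := by
        rw [mul_assoc, ← exp_add]; ring_nf

section Gaussian

variable {V : Type*} [NormedAddCommGroup V] [InnerProductSpace ℝ V] [FiniteDimensional ℝ V]
  [MeasurableSpace V] [BorelSpace V]

theorem integrable_exp_neg_mul_sq_norm {b : ℝ} (hb : 0 < b) :
    Integrable fun x : V => exp (-b * ‖x‖ ^ 2) := by
  refine Integrable.of_integral_ne_zero ?_
  rw [GaussianFourier.integral_rexp_neg_mul_sq_norm hb]
  exact (rpow_pos_of_pos (div_pos pi_pos hb) _).ne'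

theorem integrable_norm_mul_exp_neg_mul_sq_norm {b : ℝ} (hb : 0 < b) :
    Integrable fun x : V => ‖x‖ * exp (-b * ‖x‖ ^ 2) := by
  refine ((integrable_exp_neg_mul_sq_norm (half_pos hb)).const_mul (1 + 2 / b)).mono'
    (by fun_prop) (.of_forall fun x => ?_)
  rw [norm_of_nonneg (by positivity)]
  exact mul_exp_neg_mul_sq_le hb ‖x‖

end Gaussian

section HeatKernel

variable {n : ℕ}

local notation "E" => EuclideanSpace ℝ (Fin n)

theorem heatKernel_eq_mul_exp (s : ℝ) (x : E) :
    heatKernel n s x = (4 * π * s) ^ (-(n : ℝ) / 2) * exp (-(4 * s)⁻¹ * ‖x‖ ^ 2) := by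
  rw [heatKernel]; ring_nf

theorem heatKernel_nonneg {s : ℝ} (hs : 0 ≤ s) (x : E) : 0 ≤ heatKernel n s x := by
  unfold heatKernel; positivity

theorem heatKernel_le {s : ℝ} (hs : 0 ≤ s) (x : E) :
    heatKernel n s x ≤ (4 * π * s) ^ (-(n : ℝ) / 2) := by
  rw [heatKernel_eq_mul_exp]
  refine mul_le_of_le_one_right (by positivity) (exp_le_one_iff.2 ?_)
  have : 0 ≤ (4 * s)⁻¹ * ‖x‖ ^ 2 := by positivity
  linarith

theorem continuous_heatKernel (s : ℝ) : Continuous (heatKernel n s) := by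
  unfold heatKernel; fun_prop

theorem integral_heatKernel {s : ℝ} (hs : 0 < s) : ∫ x : E, heatKernel n s x = 1 := by
  simp_rw [heatKernel_eq_mul_exp]
  rw [integral_const_mul, GaussianFourier.integral_rexp_neg_mul_sq_norm (by positivity),
    finrank_euclideanSpace_fin, div_inv_eq_mul, show π * (4 * s) = 4 * π * s by ring,
    ← rpow_add (by positivity), neg_div, neg_add_cancel, rpow_zero]

theorem integrable_heatKernel {s : ℝ} (hs : 0 < s) : Integrable (heatKernel n s) :=
  .of_integral_ne_zero (by rw [integral_heatKernel hs]; exact one_ne_zero)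

theorem lintegral_enorm_heatKernel {s : ℝ} (hs : 0 < s) : ∫⁻ x : E, ‖heatKernel n s x‖ₑ = 1 := by
  rw [← ofReal_integral_norm_eq_lintegral_enorm (integrable_heatKernel hs)]
  simp_rw [norm_of_nonneg (heatKernel_nonneg hs.le _), integral_heatKernel hs, ENNReal.ofReal_one]

theorem integrable_heatKernel_sub_mul {s : ℝ} (hs : 0 ≤ s) {v : E → ℝ} (hv : Integrable v)
    (x : E) : Integrable fun y => heatKernel n s (x - y) * v y :=
  hv.bdd_mul ((continuous_heatKernel s).comp (continuous_sub_left x)).aestronglyMeasurable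
    (.of_forall fun y => by
      rw [norm_of_nonneg (heatKernel_nonneg hs _)]; exact heatKernel_le hs _)

theorem heatKernel_sqrt_smul {s : ℝ} (hs : 0 < s) (x : E) :
    heatKernel n s (√s • x) = s ^ (-(n : ℝ) / 2) * heatKernel n 1 x := by
  have hnorm : ‖√s • x‖ ^ 2 = s * ‖x‖ ^ 2 := by
    rw [norm_smul, norm_of_nonneg (sqrt_nonneg s), mul_pow, sq_sqrt hs.le]
  rw [heatKernel, heatKernel, hnorm, show 4 * π * s = s * (4 * π) by ring,
    mul_rpow hs.le (by positivity), mul_one, show -(s * ‖x‖ ^ 2) / (4 * s) = -‖x‖ ^ 2 / 4 by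
      field_simp]
  ring_nf

noncomputable def heatKernelFDeriv (n : ℕ) (s : ℝ) (x : EuclideanSpace ℝ (Fin n)) :
    EuclideanSpace ℝ (Fin n) →L[ℝ] ℝ :=
  -(heatKernel n s x / (2 * s)) • innerSL ℝ x

theorem hasFDerivAt_heatKernel (s : ℝ) (x : E) :
    HasFDerivAt (heatKernel n s) (heatKernelFDeriv n s x) x := by
  have h := (((hasStrictFDerivAt_norm_sq x).hasFDerivAt.const_mul (-(4 * s)⁻¹)).exp).const_mul
    ((4 * π * s) ^ (-(n : ℝ) / 2))
  rw [show heatKernel n s = _ from funext (heatKernel_eq_mul_exp s)]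
  refine h.congr_fderiv ?_
  ext y
  simp only [heatKernelFDeriv, heatKernel_eq_mul_exp, smul_apply, coe_innerSL_apply,
    nsmul_eq_mul, smul_eq_mul]
  ring

theorem continuous_heatKernelFDeriv (s : ℝ) : Continuous (heatKernelFDeriv n s) := by
  unfold heatKernelFDeriv
  have := continuous_heatKernel (n := n) s
  fun_prop

theorem norm_heatKernelFDeriv {s : ℝ} (hs : 0 ≤ s) (x : E) :
    ‖heatKernelFDeriv n s x‖ = heatKernel n s x / (2 * s) * ‖x‖ := by
  rw [heatKernelFDeriv, norm_smul, innerSL_apply_norm, norm_neg,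
    norm_of_nonneg (div_nonneg (heatKernel_nonneg hs x) (by positivity))]

theorem norm_heatKernelFDeriv_le {s : ℝ} (hs : 0 < s) (x : E) :
    ‖heatKernelFDeriv n s x‖ ≤ (4 * π * s) ^ (-(n : ℝ) / 2) / (2 * s) * (1 + 8 * s) := by
  have hb : 0 < (4 * s)⁻¹ := by positivity
  have hexp := mul_exp_neg_mul_sq_le hb ‖x‖
  have hexp1 : exp (-((4 * s)⁻¹ / 2) * ‖x‖ ^ 2) ≤ 1 := exp_le_one_iff.2 (by
    have : 0 ≤ (4 * s)⁻¹ / 2 * ‖x‖ ^ 2 := by positivity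
    linarith)
  rw [norm_heatKernelFDeriv hs.le, heatKernel_eq_mul_exp, mul_div_right_comm, mul_assoc,
    show 1 + 8 * s = 1 + 2 / (4 * s)⁻¹ by field_simp; ring]
  gcongr
  rw [mul_comm]
  exact hexp.trans (mul_le_of_le_one_right (by positivity) hexp1)

theorem integrable_heatKernelFDeriv {s : ℝ} (hs : 0 < s) : Integrable (heatKernelFDeriv n s) := by
  refine ((integrable_norm_mul_exp_neg_mul_sq_norm (V := E)
    (inv_pos.2 (mul_pos four_pos hs))).const_mul ((4 * π * s) ^ (-(n : ℝ) / 2) / (2 * s))).mono'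
    (continuous_heatKernelFDeriv s).aestronglyMeasurable (.of_forall fun x => ?_)
  rw [norm_heatKernelFDeriv hs.le, heatKernel_eq_mul_exp]
  exact le_of_eq (by ring)

theorem integral_norm_heatKernelFDeriv {s : ℝ} (hs : 0 < s) :
    ∫ x : E, ‖heatKernelFDeriv n s x‖ = s ^ (-(1 : ℝ) / 2) * ∫ x : E, ‖heatKernelFDeriv n 1 x‖ := by
  have hscale (x : E) : ‖heatKernelFDeriv n s (√s • x)‖
      = s ^ (-(n : ℝ) / 2) * (s ^ (-(1 : ℝ) / 2) * ‖heatKernelFDeriv n 1 x‖) := by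
    rw [norm_heatKernelFDeriv hs.le, norm_heatKernelFDeriv zero_le_one, heatKernel_sqrt_smul hs,
      norm_smul, norm_of_nonneg (sqrt_nonneg s)]
    have hrpow : s ^ (-(1 : ℝ) / 2) = √s / s := by
      rw [sqrt_eq_rpow, ← rpow_sub_one hs.ne']; norm_num
    rw [hrpow]
    ring
  have h := Measure.integral_comp_smul_of_nonneg volume (fun x : E => ‖heatKernelFDeriv n s x‖) √s
    (hR := sqrt_nonneg s)
  simp_rw [hscale, integral_const_mul, finrank_euclideanSpace_fin, smul_eq_mul] at h
  have hpow : √s ^ n * s ^ (-(n : ℝ) / 2) = 1 := by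
    rw [sqrt_eq_rpow, ← rpow_natCast, ← rpow_mul hs.le, ← rpow_add hs]
    ring_nf
    exact rpow_zero s
  rw [eq_comm, inv_mul_eq_iff_eq_mul₀ (by positivity)] at h
  rw [h, ← mul_assoc, hpow, one_mul]

end HeatKernel

section HeatConv

variable {n : ℕ} {s : ℝ} {v : EuclideanSpace ℝ (Fin n) → ℝ}

theorem hasFDerivAt_heatConv (hs : 0 < s) (hv : Integrable v) (x : EuclideanSpace ℝ (Fin n)) :
    HasFDerivAt (heatConv s v) (∫ y, v y • heatKernelFDeriv n s (x - y)) x :=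
  hasFDerivAt_integral_kernel_mul (hasFDerivAt_heatKernel s) (continuous_heatKernelFDeriv s)
    (norm_heatKernelFDeriv_le hs) hv (integrable_heatKernel_sub_mul hs.le hv) x

theorem differentiable_heatConv (hs : 0 < s) (hv : Integrable v) :
    Differentiable ℝ (heatConv s v) :=
  fun x => (hasFDerivAt_heatConv hs hv x).differentiableAt

theorem norm_fderiv_heatConv_le (hs : 0 < s) (hv : Integrable v) {M : ℝ} (hM : ∀ x, |v x| ≤ M)
    (x : EuclideanSpace ℝ (Fin n)) :
    ‖fderiv ℝ (heatConv s v) x‖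
      ≤ M * (s ^ (-(1 : ℝ) / 2) * ∫ y, ‖heatKernelFDeriv n 1 y‖) := by
  rw [(hasFDerivAt_heatConv hs hv x).fderiv, ← integral_norm_heatKernelFDeriv hs]
  exact norm_integral_smul_comp_sub_le (integrable_heatKernelFDeriv hs) hM x

theorem lintegral_enorm_heatConv_sub_le (hs : 0 < s) (hv : Integrable v)
    (hd : Differentiable ℝ v) (z : EuclideanSpace ℝ (Fin n)) :
    ∫⁻ x, ‖heatConv s v (x + z) - heatConv s v x‖ₑ ≤ ‖z‖ₑ * ∫⁻ x, ‖fderiv ℝ v x‖ₑ := by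
  refine (lintegral_enorm_kernel_conv_sub_le (continuous_heatKernel s).measurable
    hd.continuous.measurable (integrable_heatKernel_sub_mul hs.le hv) z).trans ?_
  rw [lintegral_enorm_heatKernel hs, one_mul]
  exact lintegral_enorm_sub_comp_add_le hd z

theorem lintegral_enorm_fderiv_heatConv_le (hs : 0 < s) (hv : Integrable v)
    (hd : Differentiable ℝ v) :
    ∫⁻ x, ‖fderiv ℝ (heatConv s v) x‖ₑ ≤ n * ∫⁻ x, ‖fderiv ℝ v x‖ₑ := by
  simpa using lintegral_enorm_fderiv_le_card_mul (differentiable_heatConv hs hv)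
    (lintegral_enorm_heatConv_sub_le hs hv hd)

end HeatConv

theorem integrable_fderiv_heatConv_and_integral_norm_le {n : ℕ} {s : ℝ}
    {v : EuclideanSpace ℝ (Fin n) → ℝ} (hs : 0 < s) (hv : Integrable v) (hd : Differentiable ℝ v)
    (hgi : Integrable fun x => ‖fderiv ℝ v x‖) :
    Integrable (fderiv ℝ (heatConv s v)) ∧
      ∫ x, ‖fderiv ℝ (heatConv s v) x‖ ≤ n * ∫ x, ‖fderiv ℝ v x‖ := by
  have hgi' : Integrable (fderiv ℝ v) :=
    (integrable_norm_iff (measurable_fderiv ℝ v).aestronglyMeasurable).1 hgi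
  have hbound := lintegral_enorm_fderiv_heatConv_le hs hv hd
  have hfin : (n : ENNReal) * ∫⁻ x, ‖fderiv ℝ v x‖ₑ ≠ ⊤ :=
    ENNReal.mul_ne_top (ENNReal.natCast_ne_top n) hgi'.2.ne
  refine ⟨⟨(measurable_fderiv ℝ _).aestronglyMeasurable, hbound.trans_lt hfin.lt_top⟩, ?_⟩
  rw [integral_norm_eq_lintegral_enorm (measurable_fderiv ℝ _).aestronglyMeasurable,
    integral_norm_eq_lintegral_enorm (measurable_fderiv ℝ _).aestronglyMeasurable]
  simpa using ENNReal.toReal_mono hfin hbound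

/-- The `L^∞` norm of `v₀` is represented by an arbitrary pointwise bound `M`. -/
theorem heat_gradient_L2_estimate_general (n : ℕ) :
    ∃ C : ℝ, 0 < C ∧
      ∀ (ν t : ℝ), 0 < ν → 0 < t →
      ∀ (v₀ : EuclideanSpace ℝ (Fin n) → ℝ) (M : ℝ),
        Differentiable ℝ v₀ →
        Integrable v₀ →
        Integrable (fun x => ‖fderiv ℝ v₀ x‖) →
        (∀ x, |v₀ x| ≤ M) →
        Real.sqrt (∫ x, ‖fderiv ℝ (heatConv (ν * t) v₀) x‖ ^ 2)
          ≤ C * (ν * t) ^ (-(1 : ℝ) / 4) * Real.sqrt M *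
            Real.sqrt (∫ x, ‖fderiv ℝ v₀ x‖) := by
  set c := ∫ x : EuclideanSpace ℝ (Fin n), ‖heatKernelFDeriv n 1 x‖
  refine ⟨√(n * c) + 1, by positivity, fun ν t hν ht v₀ M hd hv hgi hM => ?_⟩
  set s := ν * t
  have hs : 0 < s := mul_pos hν ht
  set G := ∫ x, ‖fderiv ℝ v₀ x‖
  obtain ⟨hw_int, hw_L1⟩ := integrable_fderiv_heatConv_and_integral_norm_le hs hv hd hgi
  have hM0 : 0 ≤ M := (abs_nonneg _).trans (hM 0)
  have hL2 : ∫ x, ‖fderiv ℝ (heatConv s v₀) x‖ ^ 2 ≤ M * (s ^ (-(1 : ℝ) / 2) * c) * (n * G) :=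
    (integral_norm_sq_le_mul_integral_norm hw_int (norm_fderiv_heatConv_le hs hv hM)).trans
      (mul_le_mul_of_nonneg_left hw_L1 (by positivity))
  have hsq : (s ^ (-(1 : ℝ) / 4)) ^ 2 = s ^ (-(1 : ℝ) / 2) := by
    rw [← rpow_natCast, ← rpow_mul hs.le]; norm_num
  have hsqrt : √(M * (s ^ (-(1 : ℝ) / 2) * c) * (n * G))
      = √(n * c) * s ^ (-(1 : ℝ) / 4) * √M * √G := by
    rw [← hsq, show M * ((s ^ (-(1 : ℝ) / 4)) ^ 2 * c) * (n * G)
      = (n * c) * (s ^ (-(1 : ℝ) / 4)) ^ 2 * M * G by ring,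
      sqrt_mul' _ (integral_nonneg fun _ => norm_nonneg _), sqrt_mul' _ hM0,
      sqrt_mul' _ (sq_nonneg _), sqrt_sq (by positivity)]
  calc √(∫ x, ‖fderiv ℝ (heatConv s v₀) x‖ ^ 2)
      ≤ √(n * c) * s ^ (-(1 : ℝ) / 4) * √M * √G := hsqrt ▸ sqrt_le_sqrt hL2
    _ ≤ (√(n * c) + 1) * s ^ (-(1 : ℝ) / 4) * √M * √G := by gcongr; linarith

/-- **Lemma (heat estimate `‖∇e^{νtΔ}v₀‖_{L²} ≲ (νt)^{-1/4} ‖v₀‖_∞^{1/2} ‖∇v₀‖_{L¹}^{1/2}`).**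
The `L^∞` norm of `v₀` is represented by an arbitrary pointwise bound `M`. -/
theorem heat_gradient_L2_estimate (n : ℕ) (hn : 1 ≤ n) :
    ∃ C : ℝ, 0 < C ∧
      ∀ (ν t : ℝ), 0 < ν → 0 < t →
      ∀ (v₀ : EuclideanSpace ℝ (Fin n) → ℝ) (M : ℝ),
        Differentiable ℝ v₀ →
        Integrable v₀ →
        Integrable (fun x => ‖fderiv ℝ v₀ x‖) →
        (∀ x, |v₀ x| ≤ M) →
        Real.sqrt (∫ x, ‖fderiv ℝ (heatConv (ν * t) v₀) x‖ ^ 2)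
          ≤ C * (ν * t) ^ (-(1 : ℝ) / 4) * Real.sqrt M *
            Real.sqrt (∫ x, ‖fderiv ℝ v₀ x‖) :=
  heat_gradient_L2_estimate_general n
end

section
/- Let n ≥ 1, ν > 0, and let f : ℝ → ℝⁿ be differentiable with locally bounded derivative. Let u : [0,∞) × ℝⁿ → ℝ be a smooth bounded solution of ∂ₜu + div(f(u)) = ν Δu on (0,∞) × ℝⁿ. Then for every t ≥ 0, ‖u(t,·)‖_{L^∞(ℝⁿ)} ≤ ‖u(0,·)‖_{L^∞(ℝⁿ)}; that is, the L^∞-norm is non-increasing in time. -/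
open MeasureTheory

/-- The partial derivative in the `i`-th coordinate direction. -/
noncomputable def spaceDeriv {n : ℕ} (v : EuclideanSpace ℝ (Fin n) → ℝ) (i : Fin n)
    (x : EuclideanSpace ℝ (Fin n)) : ℝ :=
  fderiv ℝ v x (EuclideanSpace.single i 1)

/-- The Laplacian `Δv = Σᵢ ∂²v/∂xᵢ²`. -/
noncomputable def laplacian {n : ℕ} (v : EuclideanSpace ℝ (Fin n) → ℝ)
    (x : EuclideanSpace ℝ (Fin n)) : ℝ :=
  ∑ i, spaceDeriv (spaceDeriv v i) i x

/-- The divergence `div (f ∘ v) = Σᵢ ∂ᵢ(fᵢ(v))` of the flux `f` applied to `v`. -/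
noncomputable def divFlux {n : ℕ} (f : ℝ → EuclideanSpace ℝ (Fin n))
    (v : EuclideanSpace ℝ (Fin n) → ℝ) (x : EuclideanSpace ℝ (Fin n)) : ℝ :=
  ∑ i, spaceDeriv (fun y => f (v y) i) i x

noncomputable def bumpH (s : ℝ) : ℝ := Real.sqrt (1 + s ^ 2)
noncomputable def bumpH1 (s : ℝ) : ℝ := s / Real.sqrt (1 + s ^ 2)

lemma onePlusSq_pos (s : ℝ) : 0 < 1 + s ^ 2 := by positivity

lemma bumpH_pos (s : ℝ) : 0 < bumpH s := Real.sqrt_pos.2 (onePlusSq_pos s)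

lemma bumpH_ge_one (s : ℝ) : 1 ≤ bumpH s := by
  have := Real.sqrt_le_sqrt (show (1:ℝ) ≤ 1 + s ^ 2 by nlinarith [sq_nonneg s])
  simpa [bumpH] using this

lemma abs_le_bumpH (s : ℝ) : |s| ≤ bumpH s := by
  rw [bumpH, ← Real.sqrt_sq_eq_abs]
  exact Real.sqrt_le_sqrt (by nlinarith)

lemma sq_bumpH (s : ℝ) : bumpH s ^ 2 = 1 + s ^ 2 :=
  Real.sq_sqrt (onePlusSq_pos s).le

lemma hasDerivAt_bumpH (s : ℝ) : HasDerivAt bumpH (bumpH1 s) s := by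
  have h1 : HasDerivAt (fun s : ℝ => 1 + s ^ 2) (2 * s) s := by
    simpa using ((hasDerivAt_pow 2 s).const_add 1)
  have h2 := (Real.hasDerivAt_sqrt (onePlusSq_pos s).ne').comp s h1
  refine h2.congr_deriv ?_
  rw [bumpH1]
  have := (bumpH_pos s).ne'
  rw [bumpH] at this
  field_simp

lemma abs_bumpH1_le_one (s : ℝ) : |bumpH1 s| ≤ 1 := by
  have h : |bumpH1 s| = |s| / bumpH s := by
    rw [bumpH1, bumpH, abs_div, abs_of_pos (show (0:ℝ) < Real.sqrt (1 + s ^ 2) from bumpH_pos s)]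
  rw [h, div_le_one (bumpH_pos s)]
  exact abs_le_bumpH s

lemma hasDerivAt_bumpH1 (s : ℝ) :
    ∃ c : ℝ, 0 < c ∧ c ≤ 1 ∧ HasDerivAt bumpH1 c s := by
  have hbp := bumpH_pos s
  refine ⟨1 / bumpH s ^ 3, by positivity, ?_, ?_⟩
  · rw [div_le_one (by positivity)]
    exact one_le_pow₀ (bumpH_ge_one s)
  · have hd : HasDerivAt (fun s : ℝ => s / bumpH s)
        ((1 * bumpH s - s * bumpH1 s) / bumpH s ^ 2) s :=
      (hasDerivAt_id s).div (hasDerivAt_bumpH s) (bumpH_pos s).ne'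
    have heq : (fun s : ℝ => s / bumpH s) = bumpH1 := by
      funext t; rw [bumpH1, bumpH]
    rw [heq] at hd
    convert hd using 1
    have hb1 : bumpH1 s = s / bumpH s := rfl
    have h0 := (bumpH_pos s).ne'
    have h2 := sq_bumpH s
    rw [hb1]
    field_simp
    linear_combination (-1 : ℝ) * h2

lemma differentiable_bumpH : Differentiable ℝ bumpH :=
  fun s => (hasDerivAt_bumpH s).differentiableAt

lemma deriv_bumpH : deriv bumpH = bumpH1 := funext fun s => (hasDerivAt_bumpH s).deriv

lemma differentiable_bumpH1 : Differentiable ℝ bumpH1 := fun s => by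
  obtain ⟨c, _, _, h⟩ := hasDerivAt_bumpH1 s; exact h.differentiableAt

lemma second_deriv_nonpos_of_isLocalMax {ψ : ℝ → ℝ}
    (h1 : Differentiable ℝ ψ) (h2 : Differentiable ℝ (deriv ψ))
    (hmax : IsLocalMax ψ 0) : deriv (deriv ψ) 0 ≤ 0 := by
  by_contra hc
  push_neg at hc
  have hd0 : deriv ψ 0 = 0 := hmax.deriv_eq_zero
  have hslope : Filter.Tendsto (slope (deriv ψ) 0) (nhdsWithin 0 {(0:ℝ)}ᶜ)
      (nhds (deriv (deriv ψ) 0)) :=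
    hasDerivAt_iff_tendsto_slope.1 (h2 0).hasDerivAt
  have hslope' : Filter.Tendsto (slope (deriv ψ) 0) (nhdsWithin 0 (Set.Ioi 0))
      (nhds (deriv (deriv ψ) 0)) :=
    hslope.mono_left (nhdsWithin_mono 0 (fun s hs => ne_of_gt hs))
  have hpos : ∀ᶠ s in nhdsWithin 0 (Set.Ioi 0), 0 < slope (deriv ψ) 0 s :=
    hslope'.eventually (eventually_gt_nhds hc)
  have hpos' : ∀ᶠ s in nhdsWithin 0 (Set.Ioi 0), 0 < deriv ψ s := by
    filter_upwards [hpos, self_mem_nhdsWithin] with s hs hs'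
    have : slope (deriv ψ) 0 s = deriv ψ s / s := by
      rw [slope_def_field]; ring_nf; rw [hd0]; ring
    rw [this] at hs
    have hs0 : 0 < s := hs'
    by_contra hle
    push_neg at hle
    nlinarith [div_nonpos_of_nonpos_of_nonneg hle hs0.le]
  obtain ⟨δ, hδ, hδsub⟩ := mem_nhdsGT_iff_exists_Ioo_subset.1 hpos'
  have hloc := hmax
  rw [IsLocalMax, IsMaxFilter, Metric.eventually_nhds_iff] at hloc
  obtain ⟨ε, hε, hball⟩ := hloc
  have hδ0 : 0 < δ := hδ
  set b := min (δ / 2) (ε / 2) with hb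
  have hb0 : 0 < b := by positivity
  have hψb : ψ b ≤ ψ 0 := by
    apply hball
    simp only [Real.dist_eq, sub_zero, abs_of_pos hb0]
    calc b ≤ ε / 2 := min_le_right _ _
    _ < ε := by linarith
  obtain ⟨ξ, hξ, hξd⟩ := exists_hasDerivAt_eq_slope ψ (deriv ψ) hb0
    h1.continuous.continuousOn (fun y _ => (h1 y).hasDerivAt)
  have hξpos : 0 < deriv ψ ξ := by
    apply hδsub
    constructor
    · exact hξ.1
    · calc ξ < b := hξ.2
      _ ≤ δ / 2 := min_le_left _ _
      _ < δ := by
          have : 0 < δ := by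
            have := hδ; simpa using this
          linarith
  rw [hξd] at hξpos
  have : (ψ b - ψ 0) / (b - 0) ≤ 0 :=
    div_nonpos_of_nonpos_of_nonneg (by linarith) (by linarith)
  linarith

lemma deriv_nonneg_of_left_max {ψ : ℝ → ℝ} {t₀ : ℝ} (ht : 0 < t₀)
    (hd : DifferentiableAt ℝ ψ t₀) (hmax : ∀ s ∈ Set.Icc 0 t₀, ψ s ≤ ψ t₀) :
    0 ≤ deriv ψ t₀ := by
  have hslope : Filter.Tendsto (slope ψ t₀) (nhdsWithin t₀ {t₀}ᶜ)
      (nhds (deriv ψ t₀)) := hasDerivAt_iff_tendsto_slope.1 hd.hasDerivAt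
  have hslope' : Filter.Tendsto (slope ψ t₀) (nhdsWithin t₀ (Set.Iio t₀))
      (nhds (deriv ψ t₀)) :=
    hslope.mono_left (nhdsWithin_mono t₀ (fun s hs => ne_of_lt hs))
  refine ge_of_tendsto hslope' ?_
  have hIoo : Set.Ioo 0 t₀ ∈ nhdsWithin t₀ (Set.Iio t₀) :=
    Ioo_mem_nhdsLT_of_mem ⟨ht, le_refl t₀⟩
  filter_upwards [hIoo] with s hs
  rw [slope_def_field, div_eq_mul_inv]
  have h1 : ψ s - ψ t₀ ≤ 0 := sub_nonpos.2 (hmax s ⟨hs.1.le, hs.2.le⟩)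
  have h2 : (s - t₀)⁻¹ ≤ 0 := inv_nonpos.2 (by linarith [hs.2])
  nlinarith [mul_nonneg (neg_nonneg.2 h1) (neg_nonneg.2 h2)]

lemma abs_coord_le_norm {n : ℕ} (v : EuclideanSpace ℝ (Fin n)) (i : Fin n) :
    |v i| ≤ ‖v‖ := by
  rw [EuclideanSpace.norm_eq, ← Real.sqrt_sq_eq_abs]
  refine Real.sqrt_le_sqrt ?_
  have : v i ^ 2 = ‖v i‖ ^ 2 := by rw [Real.norm_eq_abs, sq_abs]
  rw [this]
  exact Finset.single_le_sum (f := fun j => ‖v j‖ ^ 2)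
    (fun j _ => sq_nonneg _) (Finset.mem_univ i)

lemma norm_le_sum_abs {n : ℕ} (v : EuclideanSpace ℝ (Fin n)) :
    ‖v‖ ≤ ∑ i, |v i| := by
  rw [EuclideanSpace.norm_eq]
  have h1 : ∑ i, ‖v i‖ ^ 2 ≤ (∑ i, |v i|) ^ 2 := by
    simp only [Real.norm_eq_abs]
    exact Finset.sum_sq_le_sq_sum_of_nonneg (fun i _ => abs_nonneg _)
  calc Real.sqrt (∑ i, ‖v i‖ ^ 2) ≤ Real.sqrt ((∑ i, |v i|) ^ 2) := Real.sqrt_le_sqrt h1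
  _ = ∑ i, |v i| := Real.sqrt_sq (Finset.sum_nonneg fun i _ => abs_nonneg _)

section line
variable {n : ℕ}

/-- The line through `x₀` in coordinate direction `i`. -/
noncomputable def lineMap (x₀ : EuclideanSpace ℝ (Fin n)) (i : Fin n) (s : ℝ) :
    EuclideanSpace ℝ (Fin n) := x₀ + s • EuclideanSpace.single i 1

lemma hasDerivAt_lineMap (x₀ : EuclideanSpace ℝ (Fin n)) (i : Fin n) (s : ℝ) :
    HasDerivAt (lineMap x₀ i) (EuclideanSpace.single i 1) s := by
  have h := (((hasDerivAt_id s).smul_const (EuclideanSpace.single i (1:ℝ))).const_add x₀)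
  simp only [id, one_smul] at h
  exact h

lemma lineMap_zero (x₀ : EuclideanSpace ℝ (Fin n)) (i : Fin n) :
    lineMap x₀ i 0 = x₀ := by simp [lineMap]

lemma continuous_lineMap (x₀ : EuclideanSpace ℝ (Fin n)) (i : Fin n) :
    Continuous (lineMap x₀ i) := by
  unfold lineMap; fun_prop

lemma lineMap_apply (x₀ : EuclideanSpace ℝ (Fin n)) (i : Fin n) (s : ℝ) (k : Fin n) :
    lineMap x₀ i s k = x₀ k + (if k = i then s else 0) := by
  simp only [lineMap, PiLp.add_apply, PiLp.smul_apply, EuclideanSpace.single_apply,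
    smul_eq_mul]
  by_cases h : k = i <;> simp [h]

lemma hasDerivAt_line_comp (v : EuclideanSpace ℝ (Fin n) → ℝ)
    (x₀ : EuclideanSpace ℝ (Fin n)) (i : Fin n) (s : ℝ)
    (hv : DifferentiableAt ℝ v (lineMap x₀ i s)) :
    HasDerivAt (fun s => v (lineMap x₀ i s)) (spaceDeriv v i (lineMap x₀ i s)) s :=
  hv.hasFDerivAt.comp_hasDerivAt s (hasDerivAt_lineMap x₀ i s)

end line

noncomputable def gFun {n : ℕ} (x : EuclideanSpace ℝ (Fin n)) : ℝ := ∑ i, bumpH (x i)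

lemma gFun_nonneg {n : ℕ} (x : EuclideanSpace ℝ (Fin n)) : 0 ≤ gFun x :=
  Finset.sum_nonneg fun i _ => (bumpH_pos (x i)).le

lemma norm_le_gFun {n : ℕ} (x : EuclideanSpace ℝ (Fin n)) : ‖x‖ ≤ gFun x :=
  (norm_le_sum_abs x).trans (Finset.sum_le_sum fun i _ => abs_le_bumpH (x i))

lemma continuous_gFun {n : ℕ} : Continuous (gFun (n := n)) :=
  continuous_finset_sum _ fun i _ =>
    differentiable_bumpH.continuous.comp (EuclideanSpace.proj i).continuous

lemma gFun_lineMap {n : ℕ} (x₀ : EuclideanSpace ℝ (Fin n)) (i : Fin n) (s : ℝ) :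
    gFun (lineMap x₀ i s)
      = bumpH (x₀ i + s) + ∑ k ∈ Finset.univ.erase i, bumpH (x₀ k) := by
  unfold gFun
  rw [← Finset.add_sum_erase _ _ (Finset.mem_univ i)]
  congr 1
  · rw [lineMap_apply]; simp
  · refine Finset.sum_congr rfl fun k hk => ?_
    rw [lineMap_apply]
    simp [Finset.mem_erase.1 hk |>.1]

lemma contDiff_spaceDeriv {n : ℕ} {v : EuclideanSpace ℝ (Fin n) → ℝ}
    (hv : ContDiff ℝ (⊤ : ℕ∞) v) (i : Fin n) : ContDiff ℝ (⊤ : ℕ∞) (spaceDeriv v i) :=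
  (hv.fderiv_right (by simp)).clm_apply contDiff_const

lemma oneSided {n : ℕ} (ν : ℝ) (hν : 0 < ν)
    (f : ℝ → EuclideanSpace ℝ (Fin n))
    (hfdiff : Differentiable ℝ f)
    (hfloc : ∀ R : ℝ, 0 < R → ∃ M, ∀ v : ℝ, |v| ≤ R → ‖fderiv ℝ f v‖ ≤ M)
    (u : ℝ → EuclideanSpace ℝ (Fin n) → ℝ)
    (husmooth : ContDiffOn ℝ (⊤ : ℕ∞) (Function.uncurry u) (Set.Ici 0 ×ˢ Set.univ))
    (hubounded : ∃ M, ∀ t, 0 ≤ t → ∀ x, |u t x| ≤ M)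
    (hupde : ∀ t x, 0 < t →
      deriv (fun s => u s x) t + divFlux f (u t) x = ν * laplacian (u t) x)
    (M₀ : ℝ) (h0 : ∀ x, u 0 x ≤ M₀) :
    ∀ t, 0 ≤ t → ∀ x, u t x ≤ M₀ := by
  classical
  obtain ⟨M', hM'⟩ := hubounded
  set M : ℝ := |M'| + 1 with hMdef
  have hM : ∀ t, 0 ≤ t → ∀ x, |u t x| ≤ M := fun t ht x => by
    have := hM' t ht x
    have h2 := le_abs_self M'
    rw [hMdef]; linarith
  have hMpos : 0 < M := by positivity
  obtain ⟨L₀, hL₀⟩ := hfloc M hMpos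
  set L : ℝ := max L₀ 0 with hLdef
  have hL : ∀ v : ℝ, |v| ≤ M → ‖fderiv ℝ f v‖ ≤ L := fun v hv =>
    (hL₀ v hv).trans (le_max_left _ _)
  have hLnn : (0:ℝ) ≤ L := le_max_right _ _
  set C : ℝ := (n : ℝ) * (ν + L) + 1 with hCdef
  have hCpos : 0 < C := by positivity
  -- smoothness facts at positive times
  have hCDat : ∀ t (x : EuclideanSpace ℝ (Fin n)), 0 < t →
      ContDiffAt ℝ (⊤ : ℕ∞) (Function.uncurry u) (t, x) := by
    intro t x ht
    apply husmooth.contDiffAt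
    have hmem : (t, x) ∈ Set.Ioi (0:ℝ) ×ˢ (Set.univ : Set (EuclideanSpace ℝ (Fin n))) :=
      ⟨ht, trivial⟩
    apply Filter.mem_of_superset ((isOpen_Ioi.prod isOpen_univ).mem_nhds hmem)
    exact Set.prod_mono Set.Ioi_subset_Ici_self le_rfl
  have hut : ∀ t, 0 < t → ContDiff ℝ (⊤ : ℕ∞) (u t) := by
    intro t ht
    rw [contDiff_iff_contDiffAt]
    intro x
    exact (hCDat t x ht).comp x (contDiff_const.prodMk contDiff_id).contDiffAt
  have hutime : ∀ t (x : EuclideanSpace ℝ (Fin n)), 0 < t →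
      DifferentiableAt ℝ (fun s => u s x) t := by
    intro t x ht
    have := ((hCDat t x ht).differentiableAt (by simp)).comp t
      ((differentiableAt_id (𝕜 := ℝ) (E := ℝ) (x := t)).prodMk (differentiableAt_const x))
    simpa [Function.comp_def, Function.uncurry] using this
  -- the key estimate with the auxiliary weight
  have key : ∀ ε : ℝ, 0 < ε → ∀ t, 0 ≤ t → ∀ x, u t x ≤ M₀ + ε * (gFun x + C * t) := by
    intro ε hε t ht x
    by_contra hcon
    push_neg at hcon
    set A : ℝ := u t x - ε * gFun x - ε * C * t with hAdef
    have hAM₀ : M₀ < A := by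
      have hexp : ε * (gFun x + C * t) = ε * gFun x + ε * C * t := by ring
      rw [hAdef]; linarith [hcon, hexp]
    set R : ℝ := max (‖x‖ + 1) ((M - A) / ε + 1) with hRdef
    set W : ℝ × EuclideanSpace ℝ (Fin n) → ℝ :=
      fun p => u p.1 p.2 - ε * gFun p.2 - ε * C * p.1 with hWdef
    set K : Set (ℝ × EuclideanSpace ℝ (Fin n)) :=
      Set.Icc 0 t ×ˢ Metric.closedBall 0 R with hKdef
    have hKcomp : IsCompact K := isCompact_Icc.prod (isCompact_closedBall 0 R)
    have hxK : (t, x) ∈ K := by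
      refine ⟨⟨ht, le_rfl⟩, ?_⟩
      rw [mem_closedBall_zero_iff]
      calc ‖x‖ ≤ ‖x‖ + 1 := by linarith
      _ ≤ R := le_max_left _ _
    have hKsub : K ⊆ Set.Ici 0 ×ˢ Set.univ :=
      Set.prod_mono Set.Icc_subset_Ici_self (Set.subset_univ _)
    have hWcont : ContinuousOn W K := by
      refine ContinuousOn.sub (ContinuousOn.sub ?_ ?_) ?_
      · exact husmooth.continuousOn.mono hKsub
      · exact (continuous_const.mul (continuous_gFun.comp continuous_snd)).continuousOn
      · exact (continuous_const.mul continuous_fst).continuousOn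
    obtain ⟨⟨t₀, x₀⟩, hp₀K, hp₀max⟩ := hKcomp.exists_isMaxOn ⟨(t, x), hxK⟩ hWcont
    have ht₀mem : t₀ ∈ Set.Icc 0 t := hp₀K.1
    have hx₀mem : ‖x₀‖ ≤ R := mem_closedBall_zero_iff.1 hp₀K.2
    have hA_le : A ≤ W (t₀, x₀) := hp₀max hxK
    have hWval : W (t₀, x₀) = u t₀ x₀ - ε * gFun x₀ - ε * C * t₀ := rfl
    have hx₀lt : ‖x₀‖ < R := by
      have hu₀ : |u t₀ x₀| ≤ M := hM t₀ ht₀mem.1 x₀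
      have hg : ε * ‖x₀‖ ≤ ε * gFun x₀ := by
        exact mul_le_mul_of_nonneg_left (norm_le_gFun x₀) hε.le
      have hct : 0 ≤ ε * C * t₀ := by
        have := ht₀mem.1; positivity
      have h1 : W (t₀, x₀) ≤ M - ε * ‖x₀‖ := by
        rw [hWval]
        have := abs_le.1 hu₀
        linarith [this.2]
      have h2 : ε * ‖x₀‖ ≤ M - A := by linarith
      have h3 : ‖x₀‖ ≤ (M - A) / ε := (le_div_iff₀ hε).2 (by linarith [h2, mul_comm ε ‖x₀‖])
      calc ‖x₀‖ ≤ (M - A) / ε := h3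
      _ < (M - A) / ε + 1 := by linarith
      _ ≤ R := le_max_right _ _
    have ht₀pos : 0 < t₀ := by
      rcases lt_or_eq_of_le ht₀mem.1 with h | h
      · exact h
      · exfalso
        have hW0 : W (t₀, x₀) ≤ M₀ := by
          rw [hWval, ← h]
          have h1 := h0 x₀
          have h2 : 0 ≤ ε * gFun x₀ := mul_nonneg hε.le (gFun_nonneg x₀)
          simp only [mul_zero]
          linarith
        linarith
    -- the max over the slice in space
    have hWt₀max : IsLocalMax (fun y => u t₀ y - ε * gFun y) x₀ := by
      have hball : Metric.closedBall (0 : EuclideanSpace ℝ (Fin n)) R ∈ nhds x₀ := by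
        refine Filter.mem_of_superset (Metric.isOpen_ball.mem_nhds ?_)
          Metric.ball_subset_closedBall
        rw [mem_ball_zero_iff]; exact hx₀lt
      filter_upwards [hball] with y hy
      have hmem : (t₀, y) ∈ K := ⟨ht₀mem, hy⟩
      have h' : u t₀ y - ε * gFun y - ε * C * t₀ ≤ u t₀ x₀ - ε * gFun x₀ - ε * C * t₀ :=
        hp₀max hmem
      show u t₀ y - ε * gFun y ≤ u t₀ x₀ - ε * gFun x₀
      linarith
    -- restriction to coordinate lines
    have hvCD : ContDiff ℝ (⊤ : ℕ∞) (u t₀) := hut t₀ ht₀pos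
    have hmaxline : ∀ i : Fin n,
        IsLocalMax (fun s => u t₀ (lineMap x₀ i s) - ε * gFun (lineMap x₀ i s)) 0 := by
      intro i
      have htd : Filter.Tendsto (lineMap x₀ i) (nhds 0) (nhds x₀) := by
        have := (continuous_lineMap x₀ i).tendsto 0
        rwa [lineMap_zero] at this
      have hev := htd.eventually hWt₀max
      unfold IsLocalMax IsMaxFilter
      simpa [lineMap_zero] using hev
    -- derivative computations along lines
    have hψderiv : ∀ (i : Fin n) (s : ℝ),
        HasDerivAt (fun s => u t₀ (lineMap x₀ i s) - ε * gFun (lineMap x₀ i s))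
          (spaceDeriv (u t₀) i (lineMap x₀ i s) - ε * bumpH1 (x₀ i + s)) s := by
      intro i s
      have h1 := hasDerivAt_line_comp (u t₀) x₀ i s
        ((hvCD.differentiable (by simp)) _)
      have hBin : HasDerivAt (fun s : ℝ => bumpH (x₀ i + s)) (bumpH1 (x₀ i + s)) s := by
        have := (hasDerivAt_bumpH (x₀ i + s)).comp s ((hasDerivAt_id s).const_add (x₀ i))
        simpa [Function.comp_def] using this
      have hgeq : (fun s : ℝ => gFun (lineMap x₀ i s))
          = fun s => bumpH (x₀ i + s) + ∑ k ∈ Finset.univ.erase i, bumpH (x₀ k) :=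
        funext fun s => gFun_lineMap x₀ i s
      have h2' : HasDerivAt
          (fun s : ℝ => ε * (bumpH (x₀ i + s) + ∑ k ∈ Finset.univ.erase i, bumpH (x₀ k)))
          (ε * bumpH1 (x₀ i + s)) s := (hBin.add_const _).const_mul ε
      have h2 : HasDerivAt (fun s : ℝ => ε * gFun (lineMap x₀ i s))
          (ε * bumpH1 (x₀ i + s)) s := by
        refine h2'.congr_of_eventuallyEq (Filter.Eventually.of_forall fun τ => ?_)
        simp [gFun_lineMap]
      exact h1.sub h2
    -- gradient condition
    have hgrad : ∀ i : Fin n, spaceDeriv (u t₀) i x₀ = ε * bumpH1 (x₀ i) := by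
      intro i
      have h1 := (hψderiv i 0).deriv
      rw [(hmaxline i).deriv_eq_zero] at h1
      rw [lineMap_zero] at h1
      simp only [add_zero] at h1
      linarith
    -- second derivative condition
    have hsec : ∀ i : Fin n, spaceDeriv (spaceDeriv (u t₀) i) i x₀ ≤ ε := by
      intro i
      set ψ : ℝ → ℝ := fun s => u t₀ (lineMap x₀ i s) - ε * gFun (lineMap x₀ i s) with hψdef
      have hψdiff : Differentiable ℝ ψ := fun s => (hψderiv i s).differentiableAt
      have hderiv_eq : deriv ψ
          = fun s => spaceDeriv (u t₀) i (lineMap x₀ i s) - ε * bumpH1 (x₀ i + s) :=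
        funext fun s => (hψderiv i s).deriv
      have hsdCD : ContDiff ℝ (⊤ : ℕ∞) (spaceDeriv (u t₀) i) := contDiff_spaceDeriv hvCD i
      have hd2 : ∀ s : ℝ, ∃ c : ℝ, 0 < c ∧ c ≤ 1 ∧ HasDerivAt (deriv ψ)
          (spaceDeriv (spaceDeriv (u t₀) i) i (lineMap x₀ i s) - ε * c) s := by
        intro s
        obtain ⟨c, hc0, hc1, hcd⟩ := hasDerivAt_bumpH1 (x₀ i + s)
        refine ⟨c, hc0, hc1, ?_⟩
        rw [hderiv_eq]
        have h1 := hasDerivAt_line_comp (spaceDeriv (u t₀) i) x₀ i s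
          ((hsdCD.differentiable (by simp)) _)
        have h2 : HasDerivAt (fun s : ℝ => bumpH1 (x₀ i + s)) c s := by
          have := hcd.comp s ((hasDerivAt_id s).const_add (x₀ i))
          simpa [Function.comp_def] using this
        exact h1.sub (h2.const_mul ε)
      have hderivdiff : Differentiable ℝ (deriv ψ) := fun s => by
        obtain ⟨c, _, _, h⟩ := hd2 s; exact h.differentiableAt
      have h2nd := second_deriv_nonpos_of_isLocalMax hψdiff hderivdiff (hmaxline i)
      obtain ⟨c, hc0, hc1, hcd⟩ := hd2 0
      have := hcd.deriv
      rw [this] at h2nd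
      rw [lineMap_zero] at h2nd
      have hεc : ε * c ≤ ε * 1 := mul_le_mul_of_nonneg_left hc1 hε.le
      linarith
    -- Laplacian bound
    have hlap : laplacian (u t₀) x₀ ≤ (n : ℝ) * ε := by
      unfold laplacian
      calc ∑ i, spaceDeriv (spaceDeriv (u t₀) i) i x₀ ≤ ∑ _i : Fin n, ε :=
        Finset.sum_le_sum fun i _ => hsec i
      _ = (n : ℝ) * ε := by
        rw [Finset.sum_const, Finset.card_univ, Fintype.card_fin, nsmul_eq_mul]
    -- flux divergence bound
    have hdiv : |divFlux f (u t₀) x₀| ≤ (n : ℝ) * (ε * L) := by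
      have hterm : ∀ i : Fin n,
          |spaceDeriv (fun y => f (u t₀ y) i) i x₀| ≤ ε * L := by
        intro i
        have hD : HasFDerivAt (fun y => f (u t₀ y))
            ((fderiv ℝ f (u t₀ x₀)).comp (fderiv ℝ (u t₀) x₀)) x₀ :=
          (hfdiff _).hasFDerivAt.comp x₀ ((hvCD.differentiable (by simp)) x₀).hasFDerivAt
        have hDi : HasFDerivAt (fun y => f (u t₀ y) i)
            ((EuclideanSpace.proj i).comp
              ((fderiv ℝ f (u t₀ x₀)).comp (fderiv ℝ (u t₀) x₀))) x₀ := by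
          have := (EuclideanSpace.proj i).hasFDerivAt.comp x₀ hD
          exact this
        have heq : spaceDeriv (fun y => f (u t₀ y) i) i x₀
            = fderiv ℝ f (u t₀ x₀) (spaceDeriv (u t₀) i x₀) i := by
          rw [spaceDeriv, hDi.fderiv]; rfl
        rw [heq, hgrad i]
        set D := fderiv ℝ f (u t₀ x₀) with hDdef
        have hval : D (ε * bumpH1 (x₀ i)) = (ε * bumpH1 (x₀ i)) • D 1 := by
          rw [← _root_.map_smul]; congr 1; simp
        rw [hval]
        have h1 : |((ε * bumpH1 (x₀ i)) • D 1) i| = |ε * bumpH1 (x₀ i)| * |D 1 i| := by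
          rw [PiLp.smul_apply, smul_eq_mul, abs_mul]
        rw [h1]
        have h2 : |D 1 i| ≤ ‖D 1‖ := abs_coord_le_norm (D 1) i
        have h3 : ‖D 1‖ ≤ ‖D‖ := by
          have := D.le_opNorm 1
          simpa using this
        have h4 : ‖D‖ ≤ L := hL _ (hM t₀ ht₀mem.1 x₀)
        have h5 : |ε * bumpH1 (x₀ i)| ≤ ε := by
          rw [abs_mul, abs_of_pos hε]
          calc ε * |bumpH1 (x₀ i)| ≤ ε * 1 :=
            mul_le_mul_of_nonneg_left (abs_bumpH1_le_one _) hε.le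
          _ = ε := mul_one ε
        exact mul_le_mul h5 (h2.trans (h3.trans h4)) (abs_nonneg _) hε.le
      unfold divFlux
      calc |∑ i, spaceDeriv (fun y => f (u t₀ y) i) i x₀|
          ≤ ∑ i, |spaceDeriv (fun y => f (u t₀ y) i) i x₀| :=
        Finset.abs_sum_le_sum_abs _ _
      _ ≤ ∑ _i : Fin n, ε * L := Finset.sum_le_sum fun i _ => hterm i
      _ = (n : ℝ) * (ε * L) := by
        rw [Finset.sum_const, Finset.card_univ, Fintype.card_fin, nsmul_eq_mul]
    -- time derivative condition
    have htime : ε * C ≤ deriv (fun s => u s x₀) t₀ := by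
      set θ : ℝ → ℝ := fun s => u s x₀ - ε * gFun x₀ - ε * C * s with hθdef
      have hθd : HasDerivAt θ (deriv (fun s => u s x₀) t₀ - ε * C) t₀ := by
        have h1 := (hutime t₀ x₀ ht₀pos).hasDerivAt
        have h2 : HasDerivAt (fun s : ℝ => ε * C * s) (ε * C) t₀ := by
          simpa using (hasDerivAt_id t₀).const_mul (ε * C)
        exact (h1.sub_const (ε * gFun x₀)).sub h2
      have hθmax : ∀ s ∈ Set.Icc 0 t₀, θ s ≤ θ t₀ := by
        intro s hs
        have hmem : (s, x₀) ∈ K := ⟨⟨hs.1, hs.2.trans ht₀mem.2⟩, hp₀K.2⟩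
        exact hp₀max hmem
      have := deriv_nonneg_of_left_max ht₀pos hθd.differentiableAt hθmax
      rw [hθd.deriv] at this
      linarith
    -- conclude contradiction via the PDE
    have hpde := hupde t₀ x₀ ht₀pos
    have hb1 : ν * laplacian (u t₀) x₀ ≤ ν * ((n : ℝ) * ε) :=
      mul_le_mul_of_nonneg_left hlap hν.le
    have hb2 : -divFlux f (u t₀) x₀ ≤ (n : ℝ) * (ε * L) :=
      (neg_le_abs _).trans hdiv
    have hring : ε * C = ν * ((n : ℝ) * ε) + (n : ℝ) * (ε * L) + ε := by
      rw [hCdef]; ring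
    linarith
  -- finish: let ε → 0
  intro t ht x
  by_contra hgt
  push_neg at hgt
  set D : ℝ := gFun x + C * t with hD
  have hD0 : 0 ≤ D := add_nonneg (gFun_nonneg x) (mul_nonneg hCpos.le ht)
  set δ : ℝ := u t x - M₀ with hδdef
  have hδpos : 0 < δ := by rw [hδdef]; linarith
  have hεpos : 0 < δ / (2 * (D + 1)) := by positivity
  have hk := key (δ / (2 * (D + 1))) hεpos t ht x
  rw [← hD] at hk
  have h1 : δ / (2 * (D + 1)) * D ≤ δ / (2 * (D + 1)) * (D + 1) :=
    mul_le_mul_of_nonneg_left (by linarith) hεpos.le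
  have h2 : δ / (2 * (D + 1)) * (D + 1) = δ / 2 := by field_simp
  rw [h2] at h1
  have : u t x ≤ M₀ + δ / 2 := by linarith
  rw [hδdef] at this
  linarith

lemma spaceDeriv_neg {n : ℕ} (v : EuclideanSpace ℝ (Fin n) → ℝ) (i : Fin n)
    (x : EuclideanSpace ℝ (Fin n)) :
    spaceDeriv (fun y => -(v y)) i x = -spaceDeriv v i x := by
  unfold spaceDeriv
  rw [fderiv_fun_neg]
  simp

/-- **Proposition (maximum principle: the `L^∞` norm is non-increasing):**
if every `M₀` bounding `|u(0,·)|` also bounds `|u(t,·)|` for all `t ≥ 0`, then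
`‖u(t,·)‖_{L^∞} ≤ ‖u(0,·)‖_{L^∞}`. -/
theorem maximum_principle_scalar_conservation_law
    (n : ℕ) (hn : 1 ≤ n) (ν : ℝ) (hν : 0 < ν)
    (f : ℝ → EuclideanSpace ℝ (Fin n))
    (hfdiff : Differentiable ℝ f)
    (hfloc : ∀ R : ℝ, 0 < R → ∃ M, ∀ v : ℝ, |v| ≤ R → ‖fderiv ℝ f v‖ ≤ M)
    (u : ℝ → EuclideanSpace ℝ (Fin n) → ℝ)
    (husmooth : ContDiffOn ℝ (⊤ : ℕ∞) (Function.uncurry u) (Set.Ici 0 ×ˢ Set.univ))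
    (hubounded : ∃ M, ∀ t, 0 ≤ t → ∀ x, |u t x| ≤ M)
    (hupde : ∀ t x, 0 < t →
      deriv (fun s => u s x) t + divFlux f (u t) x = ν * laplacian (u t) x) :
    ∀ M₀ : ℝ, (∀ x, |u 0 x| ≤ M₀) → ∀ t, 0 ≤ t → ∀ x, |u t x| ≤ M₀ := by
  intro M₀ h0 t ht x
  have hupper : u t x ≤ M₀ :=
    oneSided ν hν f hfdiff hfloc u husmooth hubounded hupde M₀
      (fun y => (abs_le.1 (h0 y)).2) t ht x
  -- the lower bound, by applying the one-sided estimate to `-u` with flux `v ↦ -f (-v)`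
  have hgdiff : Differentiable ℝ (fun v : ℝ => -f (-v)) :=
    (hfdiff.comp differentiable_neg).neg
  have hgfderiv : ∀ v : ℝ, fderiv ℝ (fun v : ℝ => -f (-v)) v
      = -((fderiv ℝ f (-v)).comp (-(ContinuousLinearMap.id ℝ ℝ))) := by
    intro v
    have hinner : HasFDerivAt (fun v : ℝ => -v) (-(ContinuousLinearMap.id ℝ ℝ)) v :=
      (hasFDerivAt_id v).neg
    have houter := (hfdiff (-v)).hasFDerivAt
    exact ((houter.comp v hinner).neg).fderiv
  have hgloc : ∀ R : ℝ, 0 < R → ∃ M, ∀ v : ℝ, |v| ≤ R →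
      ‖fderiv ℝ (fun v : ℝ => -f (-v)) v‖ ≤ M := by
    intro R hR
    obtain ⟨M, hM⟩ := hfloc R hR
    refine ⟨M, fun v hv => ?_⟩
    rw [hgfderiv v, norm_neg]
    calc ‖(fderiv ℝ f (-v)).comp (-(ContinuousLinearMap.id ℝ ℝ))‖
        ≤ ‖fderiv ℝ f (-v)‖ * ‖-(ContinuousLinearMap.id ℝ ℝ)‖ :=
          ContinuousLinearMap.opNorm_comp_le _ _
    _ ≤ ‖fderiv ℝ f (-v)‖ * 1 := by
        have h1 : ‖-(ContinuousLinearMap.id ℝ ℝ)‖ ≤ 1 := by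
          rw [norm_neg]; exact ContinuousLinearMap.norm_id_le
        exact mul_le_mul_of_nonneg_left h1 (norm_nonneg _)
    _ = ‖fderiv ℝ f (-v)‖ := mul_one _
    _ ≤ M := hM (-v) (by rwa [abs_neg])
  have hwsmooth : ContDiffOn ℝ (⊤ : ℕ∞) (Function.uncurry (fun s y => -u s y))
      (Set.Ici 0 ×ˢ Set.univ) := husmooth.neg
  have hwbounded : ∃ M, ∀ t, 0 ≤ t → ∀ x, |(fun s y => -u s y) t x| ≤ M := by
    obtain ⟨M, hM⟩ := hubounded
    exact ⟨M, fun t ht x => by simpa [abs_neg] using hM t ht x⟩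
  have hwpde : ∀ t (x : EuclideanSpace ℝ (Fin n)), 0 < t →
      deriv (fun s => (fun s y => -u s y) s x) t
        + divFlux (fun v : ℝ => -f (-v)) ((fun s y => -u s y) t) x
        = ν * laplacian ((fun s y => -u s y) t) x := by
    intro t x ht
    have h1 : deriv (fun s => -u s x) t = -deriv (fun s => u s x) t := by
      simpa using deriv.neg (f := fun s => u s x) (x := t)
    have h2 : divFlux (fun v : ℝ => -f (-v)) (fun y => -u t y) x
        = -divFlux f (u t) x := by
      unfold divFlux
      rw [← Finset.sum_neg_distrib]
      refine Finset.sum_congr rfl fun i _ => ?_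
      have heq : (fun y => (-f (-(-u t y))) i) = fun y => -(f (u t y) i) := by
        funext y; simp
      rw [heq, spaceDeriv_neg]
    have h3 : laplacian (fun y => -u t y) x = -laplacian (u t) x := by
      unfold laplacian
      rw [← Finset.sum_neg_distrib]
      refine Finset.sum_congr rfl fun i _ => ?_
      have heq : spaceDeriv (fun y => -u t y) i = fun y => -(spaceDeriv (u t) i y) :=
        funext fun y => spaceDeriv_neg (u t) i y
      rw [heq, spaceDeriv_neg]
    have hp := hupde t x ht
    simp only []
    rw [h1, h2, h3]
    linarith
  have hlower : -u t x ≤ M₀ :=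
    oneSided ν hν (fun v : ℝ => -f (-v)) hgdiff hgloc (fun s y => -u s y)
      hwsmooth hwbounded hwpde M₀
      (fun y => by
        have := (abs_le.1 (h0 y)).1
        linarith) t ht x
  exact abs_le.2 ⟨by linarith, hupper⟩
end
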